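/- arXiv:1911.01118 — 9 statements merged into one kernel-verified Lean document; each statement's English description precedes it below -/
import Mathlib

section
/- Let G be a nontrivial connected graph of order n with maximum degree Δ(G). Then max{Δ(G), diam(G)} ≤ prc(G) ≤ χ'(G) + (n - 1 - Δ(G)); in particular prc(G) ≤ n if χ'(G) = Δ(G) + 1 and prc(G) ≤ n - 1 if χ'(G) = Δ(G). -/
open SimpleGraph

variable {V : Type*}

/-- A walk is rainbow under edge colouring `c` if its edges receive pairwise distinct colours. -/
def SimpleGraph.Walk.IsRainbow {G : SimpleGraph V} {u v : V} (c : Sym2 V → ℕ) (p : G.Walk u v) :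
    Prop :=
  (p.edges.map c).Nodup

/-- `G` is rainbow connected under the edge colouring `c`: any two vertices are joined by a
rainbow path. -/
def SimpleGraph.RainbowConnected (G : SimpleGraph V) (c : Sym2 V → ℕ) : Prop :=
  ∀ u v : V, ∃ p : G.Walk u v, p.IsPath ∧ p.IsRainbow c

/-- `c` is a proper edge colouring of `G`: adjacent edges receive distinct colours. -/
def SimpleGraph.IsProperEdgeColoring (G : SimpleGraph V) (c : Sym2 V → ℕ) : Prop :=
  ∀ ⦃u v w : V⦄, G.Adj u v → G.Adj u w → v ≠ w → c s(u, v) ≠ c s(u, w)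

/-- The colouring `c` uses at most `k` colours on the edges of `G`. -/
def SimpleGraph.ColorsLE (G : SimpleGraph V) (c : Sym2 V → ℕ) (k : ℕ) : Prop :=
  ∀ e ∈ G.edgeSet, c e < k

/-- The rainbow connection number `rc(G)`. -/
noncomputable def SimpleGraph.rcNumber (G : SimpleGraph V) : ℕ :=
  sInf {k | ∃ c : Sym2 V → ℕ, G.ColorsLE c k ∧ G.RainbowConnected c}

/-- The proper rainbow connection number `prc(G)`. -/
noncomputable def SimpleGraph.prcNumber (G : SimpleGraph V) : ℕ :=
  sInf {k | ∃ c : Sym2 V → ℕ, G.ColorsLE c k ∧ G.IsProperEdgeColoring c ∧ G.RainbowConnected c}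

/-- The chromatic index `χ'(G)`. -/
noncomputable def SimpleGraph.chromaticIndex (G : SimpleGraph V) : ℕ :=
  sInf {k | ∃ c : Sym2 V → ℕ, G.ColorsLE c k ∧ G.IsProperEdgeColoring c}

/-!
Colour the edges by an optimal proper colouring `c₀` with `χ'(G)` colours, fix a vertex `v` of
maximum degree, and let `S` be the `n - 1 - Δ(G)` vertices outside the closed neighbourhood of `v`.
Every `u ∈ S` has a neighbour strictly closer to `v`; giving each of these `|S|` edges its own fresh
colour keeps the colouring proper. Moving towards `v` along such edges, and finally along an edge at
`v`, joins every vertex to `v` using only fresh edges and edges at `v`, and these have pairwise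
distinct colours. Hence any walk through `v` built this way shortens to a rainbow path.

The lower bounds hold for every proper rainbow colouring: the edges at a vertex have distinct colours,
and a rainbow path between two vertices at distance `diam(G)` has at least `diam(G)` colours.
-/

namespace SimpleGraph

variable {G : SimpleGraph V} {c : Sym2 V → ℕ} {k : ℕ}

theorem IsProperEdgeColoring.injOn_incidenceSet (hc : G.IsProperEdgeColoring c) (v : V) :
    Set.InjOn c (G.incidenceSet v) := by
  rintro e₁ ⟨he₁, hv₁⟩ e₂ ⟨he₂, hv₂⟩ h
  obtain ⟨a, rfl⟩ := Sym2.mem_iff_exists.mp hv₁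
  obtain ⟨b, rfl⟩ := Sym2.mem_iff_exists.mp hv₂
  by_contra hne
  exact hc he₁ he₂ (by rintro rfl; exact hne rfl) h

theorem IsProperEdgeColoring.degree_le (hc : G.IsProperEdgeColoring c) (hk : G.ColorsLE c k)
    (v : V) [Fintype (G.neighborSet v)] : G.degree v ≤ k := by
  have hmaps : Set.MapsTo (fun w => c s(v, w)) (G.neighborFinset v) (Finset.range k) :=
    fun w hw => Finset.mem_range.mpr (hk _ ((G.mem_neighborFinset v w).mp hw))
  have hinj : Set.InjOn (fun w => c s(v, w)) (G.neighborFinset v) := by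
    intro w₁ hw₁ w₂ hw₂ h
    by_contra hne
    exact hc ((G.mem_neighborFinset v w₁).mp hw₁) ((G.mem_neighborFinset v w₂).mp hw₂) hne h
  simpa using Finset.card_le_card_of_injOn _ hmaps hinj

theorem RainbowConnected.dist_le (h : G.RainbowConnected c) (hk : G.ColorsLE c k) (u v : V) :
    G.dist u v ≤ k := by
  obtain ⟨p, -, hp⟩ := h u v
  have hsub : (p.edges.map c).toFinset ⊆ Finset.range k := by
    intro m hm
    obtain ⟨e, he, rfl⟩ := List.mem_map.mp (List.mem_toFinset.mp hm)
    exact Finset.mem_range.mpr (hk e (p.edges_subset_edgeSet he))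
  have hcard := Finset.card_le_card hsub
  rw [List.toFinset_card_of_nodup hp, Finset.card_range, List.length_map, p.length_edges] at hcard
  exact (SimpleGraph.dist_le p).trans hcard

theorem Connected.exists_adj_dist_lt (hconn : G.Connected) {u v : V} (huv : u ≠ v) :
    ∃ w, G.Adj u w ∧ G.dist w v < G.dist u v := by
  obtain ⟨p, hp⟩ := hconn.exists_walk_length_eq_dist u v
  cases p with
  | nil => exact absurd rfl huv
  | cons hadj q =>
    refine ⟨_, hadj, ?_⟩
    rw [Walk.length_cons] at hp
    have := dist_le q
    omega

theorem exists_walk_edges_subset_of_descent {v : V} (E : Set (Sym2 V))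
    (hE : ∀ u, u ≠ v → ∃ w, s(u, w) ∈ E ∧ G.Adj u w ∧ G.dist w v < G.dist u v) (u : V) :
    ∃ p : G.Walk u v, ∀ e ∈ p.edges, e ∈ E := by
  induction hd : G.dist u v using Nat.strong_induction_on generalizing u with
  | _ d ih =>
    by_cases huv : u = v
    · subst huv
      exact ⟨Walk.nil, by simp⟩
    obtain ⟨w, hwE, hadj, hlt⟩ := hE u huv
    obtain ⟨q, hq⟩ := ih _ (hd ▸ hlt) w rfl
    refine ⟨Walk.cons hadj q, fun e he => ?_⟩
    rcases List.mem_cons.mp (Walk.edges_cons hadj q ▸ he) with rfl | he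
    exacts [hwE, hq e he]

theorem rainbowConnected_of_injOn {v : V} (E : Set (Sym2 V)) (hinj : Set.InjOn c E)
    (hwalk : ∀ u, ∃ p : G.Walk u v, ∀ e ∈ p.edges, e ∈ E) : G.RainbowConnected c := by
  classical
  intro u w
  obtain ⟨p, hp⟩ := hwalk u
  obtain ⟨q, hq⟩ := hwalk w
  let r := p.append q.reverse
  have hr : ∀ e ∈ r.edges, e ∈ E := by
    intro e he
    rcases List.mem_append.mp (Walk.edges_append _ _ ▸ he) with he | he
    exacts [hp e he, hq e (List.mem_reverse.mp (Walk.edges_reverse q ▸ he))]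
  refine ⟨r.bypass, r.bypass_isPath, r.bypass_isPath.edges_nodup.map_on fun e₁ he₁ e₂ he₂ h => ?_⟩
  exact hinj (hr e₁ (r.edges_bypass_subset_edges he₁)) (hr e₂ (r.edges_bypass_subset_edges he₂)) h

section RecolorFresh

variable {ι : Type*} [Fintype ι] {g : ι → Sym2 V}

/-- `c` with the edges `g i` recoloured by the fresh colours `k, k + 1, …, k + |ι| - 1`. -/
noncomputable def recolorFresh (c : Sym2 V → ℕ) (k : ℕ) (g : ι → Sym2 V) : Sym2 V → ℕ :=
  Function.extend g (fun i => k + Fintype.equivFin ι i) c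

theorem recolorFresh_apply (hg : g.Injective) (i : ι) :
    recolorFresh c k g (g i) = k + Fintype.equivFin ι i :=
  hg.extend_apply _ _ i

theorem recolorFresh_apply_of_notMem_range {e : Sym2 V} (he : e ∉ Set.range g) :
    recolorFresh c k g e = c e :=
  Function.extend_apply' _ _ e he

theorem colorsLE_recolorFresh (hk : G.ColorsLE c k) (hg : g.Injective) :
    G.ColorsLE (recolorFresh c k g) (k + Fintype.card ι) := by
  intro e he
  by_cases hr : e ∈ Set.range g
  · obtain ⟨i, rfl⟩ := hr
    rw [recolorFresh_apply hg]
    have := (Fintype.equivFin ι i).isLt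
    omega
  · rw [recolorFresh_apply_of_notMem_range hr]
    exact (hk e he).trans_le (Nat.le_add_right k _)

theorem eq_or_of_recolorFresh_eq (hk : G.ColorsLE c k) (hg : g.Injective) {e₁ e₂ : Sym2 V}
    (he₁ : e₁ ∈ Set.range g ∪ G.edgeSet) (he₂ : e₂ ∈ Set.range g ∪ G.edgeSet)
    (h : recolorFresh c k g e₁ = recolorFresh c k g e₂) :
    e₁ = e₂ ∨ e₁ ∉ Set.range g ∧ e₂ ∉ Set.range g ∧ c e₁ = c e₂ := by
  have fresh_ne_old : ∀ i e, e ∈ Set.range g ∪ G.edgeSet → e ∉ Set.range g →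
      recolorFresh c k g (g i) ≠ recolorFresh c k g e := by
    intro i e he hr
    have := hk e (he.resolve_left hr)
    rw [recolorFresh_apply hg, recolorFresh_apply_of_notMem_range hr]
    omega
  by_cases hr₁ : e₁ ∈ Set.range g <;> by_cases hr₂ : e₂ ∈ Set.range g
  · obtain ⟨i, rfl⟩ := hr₁
    obtain ⟨j, rfl⟩ := hr₂
    rw [recolorFresh_apply hg, recolorFresh_apply hg, add_right_inj, Fin.val_inj,
      Equiv.apply_eq_iff_eq] at h
    exact Or.inl (congrArg g h)
  · obtain ⟨i, rfl⟩ := hr₁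
    exact absurd h (fresh_ne_old i _ he₂ hr₂)
  · obtain ⟨i, rfl⟩ := hr₂
    exact absurd h.symm (fresh_ne_old i _ he₁ hr₁)
  · rw [recolorFresh_apply_of_notMem_range hr₁, recolorFresh_apply_of_notMem_range hr₂] at h
    exact Or.inr ⟨hr₁, hr₂, h⟩

theorem isProperEdgeColoring_recolorFresh (hc : G.IsProperEdgeColoring c) (hk : G.ColorsLE c k)
    (hg : g.Injective) : G.IsProperEdgeColoring (recolorFresh c k g) := by
  intro u v w huv huw hvw h
  rcases eq_or_of_recolorFresh_eq hk hg (Or.inr huv) (Or.inr huw) h with heq | ⟨-, -, h⟩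
  exacts [hvw (Sym2.congr_right.mp heq), hc huv huw hvw h]

theorem injOn_recolorFresh (hc : G.IsProperEdgeColoring c)
    (hk : G.ColorsLE c k) (hg : g.Injective) (v : V) :
    Set.InjOn (recolorFresh c k g) (Set.range g ∪ G.incidenceSet v) := by
  have hsub : Set.range g ∪ G.incidenceSet v ⊆ Set.range g ∪ G.edgeSet :=
    Set.union_subset_union_right _ (G.incidenceSet_subset v)
  intro e₁ he₁ e₂ he₂ h
  rcases eq_or_of_recolorFresh_eq hk hg (hsub he₁) (hsub he₂) h with heq | ⟨hr₁, hr₂, h⟩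
  exacts [heq, hc.injOn_incidenceSet v (he₁.resolve_left hr₁) (he₂.resolve_left hr₂) h]

end RecolorFresh

theorem exists_chromaticIndex_coloring [Finite V] (G : SimpleGraph V) :
    ∃ c, G.ColorsLE c G.chromaticIndex ∧ G.IsProperEdgeColoring c := by
  obtain ⟨m, ⟨φ⟩⟩ := Finite.exists_equiv_fin (Sym2 V)
  refine Nat.sInf_mem (s := {k | ∃ c, G.ColorsLE c k ∧ G.IsProperEdgeColoring c}) ⟨m, fun e => φ e, fun e _ => (φ e).isLt, ?_⟩
  intro u v w _ _ hvw h
  exact hvw (Sym2.congr_right.mp (φ.injective (Fin.val_injective h)))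

variable [Fintype V] [DecidableRel G.Adj]

theorem Connected.exists_rainbowConnected_coloring (hconn : G.Connected) :
    ∃ c, G.ColorsLE c (G.chromaticIndex + (Fintype.card V - 1 - G.maxDegree)) ∧
      G.IsProperEdgeColoring c ∧ G.RainbowConnected c := by
  classical
  obtain ⟨c, hcχ, hc⟩ := G.exists_chromaticIndex_coloring
  have := hconn.nonempty
  obtain ⟨v, hv⟩ := G.exists_maximal_degree_vertex
  set S : Finset V := (insert v (G.neighborFinset v))ᶜ
  have hS : ∀ u, u ∈ S ↔ u ≠ v ∧ ¬ G.Adj v u := by simp [S]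
  have hScard : S.card = Fintype.card V - 1 - G.maxDegree := by
    rw [Finset.card_compl, Finset.card_insert_of_notMem (by simp), card_neighborFinset_eq_degree,
      hv, Nat.sub_sub, add_comm]
  choose par hpar using fun u : S => hconn.exists_adj_dist_lt ((hS u).1 u.2).1
  let g : S → Sym2 V := fun u => s(u, par u)
  have hg : g.Injective := by
    intro a b hab
    rcases Sym2.eq_iff.mp hab with ⟨h, -⟩ | ⟨h₁, h₂⟩
    · exact Subtype.ext h
    · have ha := (hpar a).2
      rw [h₁, h₂] at ha
      exact absurd (hpar b).2 (lt_asymm ha)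
  refine ⟨recolorFresh c _ g, by simpa [hScard] using colorsLE_recolorFresh hcχ hg,
    isProperEdgeColoring_recolorFresh hc hcχ hg,
    rainbowConnected_of_injOn _ (injOn_recolorFresh hc hcχ hg v)
      (exists_walk_edges_subset_of_descent (v := v) _ fun u hu => ?_)⟩
  by_cases hvu : G.Adj v u
  · refine ⟨v, Or.inr (G.mk'_mem_incidenceSet_right_iff.mpr hvu.symm), hvu.symm, ?_⟩
    simpa using hconn.pos_dist_of_ne hu
  · have huS : u ∈ S := (hS u).2 ⟨hu, hvu⟩
    exact ⟨par ⟨u, huS⟩, Or.inl ⟨⟨u, huS⟩, rfl⟩, hpar ⟨u, huS⟩⟩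

theorem Connected.prcNumber_le (hconn : G.Connected) :
    G.prcNumber ≤ G.chromaticIndex + (Fintype.card V - 1 - G.maxDegree) :=
  Nat.sInf_le hconn.exists_rainbowConnected_coloring

theorem Connected.exists_prcNumber_coloring (hconn : G.Connected) :
    ∃ c, G.ColorsLE c G.prcNumber ∧ G.IsProperEdgeColoring c ∧ G.RainbowConnected c :=
  Nat.sInf_mem (s := {k | ∃ c, G.ColorsLE c k ∧ G.IsProperEdgeColoring c ∧ G.RainbowConnected c})
    ⟨_, hconn.exists_rainbowConnected_coloring⟩

theorem Connected.maxDegree_le_prcNumber (hconn : G.Connected) : G.maxDegree ≤ G.prcNumber := by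
  obtain ⟨c, hk, hc, -⟩ := hconn.exists_prcNumber_coloring
  exact G.maxDegree_le_of_forall_degree_le _ fun v => hc.degree_le hk v

theorem Connected.diam_le_prcNumber (hconn : G.Connected) : G.diam ≤ G.prcNumber := by
  obtain ⟨c, hk, -, hrc⟩ := hconn.exists_prcNumber_coloring
  have := hconn.nonempty
  obtain ⟨u, v, huv⟩ := G.exists_dist_eq_diam
  exact huv ▸ hrc.dist_le hk u v

end SimpleGraph

theorem stmt0_general {V : Type*} [Fintype V] (G : SimpleGraph V) [DecidableRel G.Adj]
    (hconn : G.Connected) :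
    (max G.maxDegree G.diam ≤ G.prcNumber ∧
      G.prcNumber ≤ G.chromaticIndex + (Fintype.card V - 1 - G.maxDegree)) ∧
    (G.chromaticIndex = G.maxDegree + 1 → G.prcNumber ≤ Fintype.card V) ∧
    (G.chromaticIndex = G.maxDegree → G.prcNumber ≤ Fintype.card V - 1) := by
  have := hconn.nonempty
  have hΔ := G.maxDegree_lt_card_verts
  have hup := hconn.prcNumber_le
  exact ⟨⟨max_le hconn.maxDegree_le_prcNumber hconn.diam_le_prcNumber, hup⟩,
    fun h => by omega, fun h => by omega⟩

theorem stmt0 {V : Type*} [Fintype V] [DecidableEq V] (G : SimpleGraph V) [DecidableRel G.Adj]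
    (hconn : G.Connected) (hn : 2 ≤ Fintype.card V) :
    (max G.maxDegree G.diam ≤ G.prcNumber ∧
      G.prcNumber ≤ G.chromaticIndex + (Fintype.card V - 1 - G.maxDegree)) ∧
    (G.chromaticIndex = G.maxDegree + 1 → G.prcNumber ≤ Fintype.card V) ∧
    (G.chromaticIndex = G.maxDegree → G.prcNumber ≤ Fintype.card V - 1) :=
  stmt0_general G hconn
end

section
/- For all integers k and t with k ≥ t ≥ 1 there exists a connected graph G with maximum degree Δ(G) = 2t² + 1 and diameter diam(G) = 2t² + 1 + k such that prc(G) ≥ rc(G) + t. -/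
open SimpleGraph

variable {V : Type*}

/-!
The witness is the friendship graph on `n = t²` triangles sharing a hub, with a path (the tail)
of length `m = 2t² + k` attached at the hub. The hub has degree `2n + 1`, every other vertex has
degree at most `2`, and the diameter `m + 1` is realised between a triangle vertex and the end of
the tail.

Colouring the tail edges `0, …, m - 1`, the two spokes of each triangle `m` and `m + 1` (both `m`
if `n = 1`) and the remaining triangle edges `0` makes the graph rainbow connected, so
`rc ≤ m + min n 2`. Conversely, a rainbow path from a triangle vertex to the end of the tail uses
every tail edge, so the tail carries `m` distinct colours, and the path leaves its triangle
through a spoke, possibly after the third edge of the triangle, whose colour is not a tail colour.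
Such a spoke in every triangle gives `n` new colours, distinct by properness at the hub, and the
paths from the two vertices of one triangle give two new colours among its three edges. Hence
`prc ≥ m + max n 2`, and `max n 2 - min n 2 ≥ t` for `n = t²`.
-/

namespace SimpleGraph

section Rainbow

variable {G : SimpleGraph V} {c : Sym2 V → ℕ}

theorem Walk.IsRainbow.reverse {u v : V} {p : G.Walk u v} (hp : p.IsRainbow c) :
    p.reverse.IsRainbow c := by
  rwa [Walk.IsRainbow, Walk.edges_reverse, List.map_reverse, List.nodup_reverse]

theorem Walk.IsRainbow.bypass [DecidableEq V] {u v : V} {p : G.Walk u v} (hp : p.IsRainbow c) :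
    p.bypass.IsRainbow c :=
  p.bypass_isPath.isTrail.edges_nodup.map_on fun _ hx _ hy hxy =>
    List.inj_on_of_nodup_map hp (p.edges_bypass_subset_edges hx)
      (p.edges_bypass_subset_edges hy) hxy

theorem rainbowConnected_iff_exists_rainbow_walk :
    G.RainbowConnected c ↔ ∀ u v, ∃ p : G.Walk u v, p.IsRainbow c := by
  classical
  refine ⟨fun h u v => (h u v).imp fun _ hp => hp.2, fun h u v => ?_⟩
  obtain ⟨p, hp⟩ := h u v
  exact ⟨p.bypass, p.bypass_isPath, hp.bypass⟩

theorem RainbowConnected.preconnected (h : G.RainbowConnected c) : G.Preconnected :=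
  fun u v => (h u v).elim fun p _ => ⟨p⟩

theorem rcNumber_le {k : ℕ} (hc : G.ColorsLE c k) (h : G.RainbowConnected c) :
    G.rcNumber ≤ k :=
  Nat.sInf_le ⟨c, hc, h⟩

theorem le_prcNumber [Finite V] (hG : G.Preconnected) {N : ℕ}
    (h : ∀ c k, G.ColorsLE c k → G.IsProperEdgeColoring c → G.RainbowConnected c → N ≤ k) :
    N ≤ G.prcNumber := by
  classical
  obtain ⟨k, ⟨e⟩⟩ := Finite.exists_equiv_fin (Sym2 V)
  have hinj : Function.Injective fun x => (e x).val := fun _ _ hxy => e.injective (Fin.ext hxy)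
  have hne :
      {k | ∃ c, G.ColorsLE c k ∧ G.IsProperEdgeColoring c ∧ G.RainbowConnected c}.Nonempty := by
    refine ⟨k, _, fun x _ => (e x).isLt, fun u v w _ _ hvw hc => hvw ?_, fun u v => ?_⟩
    · exact Sym2.congr_right.mp (hinj hc)
    · obtain ⟨p⟩ := hG u v
      exact ⟨p.bypass, p.bypass_isPath, p.bypass_isPath.isTrail.edges_nodup.map hinj⟩
  obtain ⟨c, hc, hprop, hrc⟩ := Nat.sInf_mem hne
  exact h c _ hc hprop hrc

end Rainbow

theorem Walk.apply_le_apply_add_length {G : SimpleGraph V} {f : V → ℕ}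
    (hf : ∀ x y, G.Adj x y → f y ≤ f x + 1) {u v : V} (p : G.Walk u v) : f v ≤ f u + p.length := by
  induction p with
  | nil => simp
  | cons h _ ih => rw [Walk.length_cons]; have := hf _ _ h; omega

/-- The friendship graph on `n` triangles with a path of length `m` attached at the common
vertex: `.inl (i, β)`, `β : Bool`, are the two other vertices of the `i`-th triangle, `.inr a` is
the `a`-th vertex of the tail, and `.inr 0` is the hub. -/
def windmillTail (n m : ℕ) : SimpleGraph ((Fin n × Bool) ⊕ Fin (m + 1)) where
  Adj
    | .inl (i, β), .inl (j, γ) => i = j ∧ β ≠ γ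
    | .inl _, .inr a | .inr a, .inl _ => a = 0
    | .inr a, .inr b => a.val + 1 = b.val ∨ b.val + 1 = a.val
  symm := ⟨by
    rintro (⟨i, β⟩ | a) (⟨j, γ⟩ | b) h
    exacts [⟨h.1.symm, h.2.symm⟩, h, h, h.symm]⟩
  loopless := ⟨by
    rintro (⟨i, β⟩ | a) h
    exacts [h.2 rfl, by omega]⟩

namespace windmillTail

variable {n m : ℕ}

local notation "Vert" => (Fin n × Bool) ⊕ Fin (m + 1)

instance : DecidableRel (windmillTail n m).Adj
  | .inl (i, β), .inl (j, γ) => inferInstanceAs (Decidable (i = j ∧ β ≠ γ))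
  | .inl _, .inr a | .inr a, .inl _ => inferInstanceAs (Decidable (a = 0))
  | .inr a, .inr b => inferInstanceAs (Decidable (a.val + 1 = b.val ∨ b.val + 1 = a.val))

@[simp] lemma adj_inl_inl {i j : Fin n} {β γ : Bool} :
    (windmillTail n m).Adj (.inl (i, β)) (.inl (j, γ)) ↔ i = j ∧ β ≠ γ := Iff.rfl

@[simp] lemma adj_inl_inr {p : Fin n × Bool} {a : Fin (m + 1)} :
    (windmillTail n m).Adj (.inl p) (.inr a) ↔ a = 0 := Iff.rfl

@[simp] lemma adj_inr_inl {p : Fin n × Bool} {a : Fin (m + 1)} :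
    (windmillTail n m).Adj (.inr a) (.inl p) ↔ a = 0 := Iff.rfl

@[simp] lemma adj_inr_inr {a b : Fin (m + 1)} :
    (windmillTail n m).Adj (.inr a) (.inr b) ↔ a.val + 1 = b.val ∨ b.val + 1 = a.val := Iff.rfl

def tailVert (a : ℕ) : Vert := .inr (Fin.ofNat (m + 1) a)

def tailEdge (j : ℕ) : Sym2 Vert := s(tailVert j, tailVert (j + 1))

/-- Changes by at most one along an edge, and `tailEdge j` is the only edge from height `≤ j + 1`
to height `> j + 1`: this bounds the diameter from below and puts every tail edge on each walk
from a triangle to the end of the tail. -/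
def height : Vert → ℕ
  | .inl _ => 0
  | .inr a => a + 1

lemma inr_eq_tailVert (a : Fin (m + 1)) : (.inr a : Vert) = tailVert (a : ℕ) := by
  simp [tailVert]

lemma tailVert_eq_inr {a : ℕ} (h : a ≤ m) :
    (tailVert a : Vert) = .inr ⟨a, by omega⟩ := by
  rw [tailVert, Sum.inr.injEq, Fin.ext_iff, Fin.val_ofNat, Nat.mod_eq_of_lt (by omega)]

lemma adj_tailVert_succ {a : ℕ} (h : a < m) :
    (windmillTail n m).Adj (tailVert a) (tailVert (a + 1)) := by
  rw [tailVert_eq_inr h.le, tailVert_eq_inr h, adj_inr_inr]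
  exact .inl rfl

lemma inl_not_mem_tailEdge (p : Fin n × Bool) (j : ℕ) : .inl p ∉ (tailEdge j : Sym2 Vert) := by
  simp [tailEdge, tailVert]

lemma height_le_of_adj {x y : Vert} (h : (windmillTail n m).Adj x y) :
    height y ≤ height x + 1 := by
  rcases x with _ | a <;> rcases y with _ | b <;> simp_all [height]
  omega

lemma eq_tailEdge_of_adj {x y : Vert} {j : ℕ} (h : (windmillTail n m).Adj x y)
    (hx : height x ≤ j + 1) (hy : j + 1 < height y) : s(x, y) = tailEdge j := by
  rcases x with _ | a <;> rcases y with _ | b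
  · simp [height] at hy
  · rw [adj_inl_inr] at h
    simp [height, h] at hy
  · simp [height] at hy
  · rw [adj_inr_inr] at h
    simp only [height] at hx hy
    rw [inr_eq_tailVert a, inr_eq_tailVert b, show (a : ℕ) = j by omega,
      show (b : ℕ) = j + 1 by omega, tailEdge]

lemma tailEdge_mem_edges {u v : Vert} (p : (windmillTail n m).Walk u v) {j : ℕ}
    (hu : height u ≤ j + 1) (hv : j + 1 < height v) : tailEdge j ∈ p.edges := by
  obtain ⟨d, hd, hfst, hsnd⟩ :=
    p.exists_boundary_dart {x | height x ≤ j + 1} hu (by simpa using hv)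
  rw [← eq_tailEdge_of_adj d.adj hfst (by simpa using hsnd)]
  exact List.mem_map_of_mem hd

def tailWalk (a : ℕ) :
    (d : ℕ) → a + d ≤ m → (windmillTail n m).Walk (tailVert a) (tailVert (a + d))
  | 0, _ => .nil
  | d + 1, h => (tailWalk a d (by omega)).concat (adj_tailVert_succ (by omega))

lemma edges_tailWalk (a d : ℕ) (h : a + d ≤ m) :
    (tailWalk (n := n) a d h).edges = (List.range' a d).map tailEdge := by
  induction d with
  | zero => rfl
  | succ d ih =>
    rw [tailWalk, Walk.edges_concat, ih, List.concat_eq_append, List.range'_1_concat,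
      List.map_append]
    rfl

lemma exists_walk_inr_inr {a b : Fin (m + 1)} (hab : a ≤ b) :
    ∃ p : (windmillTail n m).Walk (.inr a) (.inr b),
      p.edges = (List.range' a (b - a)).map tailEdge := by
  have hb : a + (b - a : ℕ) = b := by omega
  refine ⟨(tailWalk a (b - a) (by omega)).copy (inr_eq_tailVert a).symm ?_,
    by rw [Walk.edges_copy, edges_tailWalk]⟩
  rw [hb, ← inr_eq_tailVert]

def rcColour (s : ℕ) : Vert → Vert → ℕ
  | .inl _, .inl _ => 0
  | .inl (_, β), .inr _ | .inr _, .inl (_, β) => if β then m + s else m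
  | .inr a, .inr b => min a b

def rcColouring (s : ℕ) : Sym2 Vert → ℕ :=
  Sym2.lift ⟨rcColour s, by rintro (_ | a) (_ | b) <;> simp [rcColour, min_comm]⟩

lemma rcColouring_le (s : ℕ) (e : Sym2 Vert) : rcColouring s e ≤ m + s := by
  induction e with
  | _ x y =>
    rcases x with ⟨_, β⟩ | a <;> rcases y with ⟨_, γ⟩ | b <;>
      simp only [rcColouring, rcColour, Sym2.lift_mk] <;> grind

lemma rcColouring_tailEdge (s : ℕ) {j : ℕ} (hj : j < m) :
    rcColouring (n := n) (m := m) s (tailEdge j) = j := by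
  simp only [rcColouring, tailEdge, tailVert_eq_inr hj.le, tailVert_eq_inr hj, Sym2.lift_mk,
    rcColour]
  omega

variable {s : ℕ}

lemma map_rcColouring_tailEdge {a d : ℕ} (h : a + d ≤ m) :
    ((List.range' a d).map tailEdge).map (rcColouring (n := n) (m := m) s) = List.range' a d := by
  rw [List.map_map]
  refine (List.map_congr_left fun j hj => ?_).trans (List.map_id _)
  rw [List.mem_range'_1] at hj
  exact rcColouring_tailEdge s (by omega)

lemma exists_rainbow_walk_inr_inr {a b : Fin (m + 1)} (hab : a ≤ b) :
    ∃ p : (windmillTail n m).Walk (.inr a) (.inr b), p.IsRainbow (rcColouring s) := by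
  obtain ⟨p, hp⟩ := exists_walk_inr_inr (n := n) hab
  refine ⟨p, ?_⟩
  rw [Walk.IsRainbow, hp, map_rcColouring_tailEdge (by omega)]
  exact List.nodup_range'

lemma exists_rainbow_walk_inl_inr (p : Fin n × Bool) (b : Fin (m + 1)) :
    ∃ q : (windmillTail n m).Walk (.inl p) (.inr b), q.IsRainbow (rcColouring s) := by
  obtain ⟨q, hq⟩ := exists_walk_inr_inr (n := n) (Fin.zero_le b)
  refine ⟨.cons (by simp) q, ?_⟩
  rw [Walk.IsRainbow, Walk.edges_cons, List.map_cons, hq, map_rcColouring_tailEdge (by simp; omega)]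
  refine List.nodup_cons.mpr ⟨fun hmem => ?_, List.nodup_range'⟩
  rw [List.mem_range'_1] at hmem
  simp only [rcColouring, rcColour, Sym2.lift_mk] at hmem
  split at hmem <;> omega

lemma exists_rainbow_walk_inl_inl (hm : 0 < m) (hs : 0 < s ∨ n ≤ 1) (p q : Fin n × Bool) :
    ∃ w : (windmillTail n m).Walk (.inl p) (.inl q), w.IsRainbow (rcColouring s) := by
  obtain ⟨i, β⟩ := p
  obtain ⟨j, γ⟩ := q
  by_cases hij : i = j
  · subst hij
    by_cases hβγ : β = γ
    · subst hβγ
      exact ⟨.nil, by simp [Walk.IsRainbow]⟩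
    · exact ⟨.cons (by simpa using hβγ) .nil, by simp [Walk.IsRainbow]⟩
  have hs : 0 < s := hs.resolve_right fun hn => hij (Fin.ext (by omega))
  by_cases hβγ : β = γ
  · subst hβγ
    refine ⟨.cons (v := .inr 0) (by simp) (.cons (v := .inl (j, !β)) (by simp)
      (.cons (by simp) .nil)), ?_⟩
    cases β <;> simp [Walk.IsRainbow, rcColouring, rcColour] <;> omega
  · refine ⟨.cons (v := .inr 0) (by simp) (.cons (by simp) .nil), ?_⟩
    cases β <;> cases γ <;> simp_all [Walk.IsRainbow, rcColouring, rcColour] <;> omega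

lemma rainbowConnected_rcColouring (hm : 0 < m) (hs : 0 < s ∨ n ≤ 1) :
    (windmillTail n m).RainbowConnected (rcColouring s) := by
  rw [rainbowConnected_iff_exists_rainbow_walk]
  rintro (p | a) (q | b)
  · exact exists_rainbow_walk_inl_inl hm hs p q
  · exact exists_rainbow_walk_inl_inr p b
  · obtain ⟨w, hw⟩ := exists_rainbow_walk_inl_inr (s := s) q a
    exact ⟨w.reverse, hw.reverse⟩
  · rcases le_total a b with hab | hab
    · exact exists_rainbow_walk_inr_inr hab
    · obtain ⟨w, hw⟩ := exists_rainbow_walk_inr_inr (s := s) hab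
      exact ⟨w.reverse, hw.reverse⟩

lemma neighborFinset_hub (hm : 0 < m) :
    (windmillTail n m).neighborFinset (.inr 0) =
      .cons (.inr ⟨1, by omega⟩) (Finset.univ.map .inl) (by simp) := by
  ext (p | b)
  · simp
  · simp only [mem_neighborFinset, adj_inr_inr, Finset.mem_cons, Sum.inr.injEq, Finset.mem_map,
      Function.Embedding.inl_apply, reduceCtorEq, and_false, exists_false, or_false, Fin.ext_iff,
      Fin.val_zero]
    omega

lemma degree_hub (hm : 0 < m) : (windmillTail n m).degree (.inr 0) = 2 * n + 1 := by
  rw [← card_neighborFinset_eq_degree, neighborFinset_hub hm, Finset.card_cons, Finset.card_map,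
    Finset.card_univ, Fintype.card_prod, Fintype.card_fin, Fintype.card_bool, mul_comm]

lemma degree_le_two {x : Vert} (hx : x ≠ .inr 0) :
    (windmillTail n m).degree x ≤ 2 := by
  rw [← card_neighborFinset_eq_degree]
  obtain ⟨y, z, h⟩ : ∃ y z, (windmillTail n m).neighborFinset x ⊆ {y, z} := by
    rcases x with ⟨i, β⟩ | a
    · refine ⟨.inl (i, !β), .inr 0, fun w hw => ?_⟩
      rcases w with ⟨j, γ⟩ | b <;> cases β <;> simp_all
    · refine ⟨tailVert (a - 1), tailVert (a + 1), fun w hw => ?_⟩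
      rcases w with _ | b
      · simp_all
      · have := b.isLt
        rw [mem_neighborFinset, adj_inr_inr] at hw
        rw [Finset.mem_insert, Finset.mem_singleton, inr_eq_tailVert b]
        rcases hw with h | h
        · exact .inr (by rw [← h])
        · exact .inl (by rw [← h, Nat.add_sub_cancel])
  exact (Finset.card_le_card h).trans Finset.card_le_two

lemma edist_inr_inr_le (a b : Fin (m + 1)) : (windmillTail n m).edist (.inr a) (.inr b) ≤ m := by
  wlog hab : a ≤ b generalizing a b
  · rw [edist_comm]
    exact this b a (le_of_not_ge hab)
  obtain ⟨p, hp⟩ := exists_walk_inr_inr (n := n) hab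
  calc (windmillTail n m).edist (.inr a) (.inr b) ≤ p.length := p.edist_le
    _ ≤ m := by
      rw [← Walk.length_edges, hp, List.length_map, List.length_range']
      exact_mod_cast (show (b : ℕ) - a ≤ m by omega)

lemma edist_inl_inr_le (p : Fin n × Bool) (b : Fin (m + 1)) :
    (windmillTail n m).edist (.inl p) (.inr b) ≤ b + 1 := by
  obtain ⟨q, hq⟩ := exists_walk_inr_inr (n := n) (Fin.zero_le b)
  calc (windmillTail n m).edist (.inl p) (.inr b) ≤ (q.cons (by simp)).length := Walk.edist_le _
    _ = b + 1 := by
      rw [Walk.length_cons, ← Walk.length_edges, hq, List.length_map, List.length_range']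
      simp

lemma ediam_le (hm : 0 < m) : (windmillTail n m).ediam ≤ ↑(m + 1) := by
  refine ediam_le_of_edist_le ?_
  have inl_inr (p : Fin n × Bool) (b : Fin (m + 1)) :
      (windmillTail n m).edist (.inl p) (.inr b) ≤ ↑(m + 1) :=
    (edist_inl_inr_le p b).trans (by exact_mod_cast (show (b : ℕ) + 1 ≤ m + 1 by omega))
  rintro (p | a) (q | b)
  · calc (windmillTail n m).edist (.inl p) (.inl q)
        ≤ (windmillTail n m).edist (.inl p) (.inr 0) +
            (windmillTail n m).edist (.inr 0) (.inl q) := SimpleGraph.edist_triangle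
      _ = 2 := by rw [edist_eq_one_iff_adj.mpr (by simp), edist_eq_one_iff_adj.mpr (by simp)]; rfl
      _ ≤ ↑(m + 1) := by exact_mod_cast (show 2 ≤ m + 1 by omega)
  · exact inl_inr p b
  · exact edist_comm.trans_le (inl_inr q a)
  · exact (edist_inr_inr_le a b).trans (by exact_mod_cast m.le_succ)

def spoke (i : Fin n) (β : Bool) : Sym2 Vert := s(.inr 0, .inl (i, β))

def triEdge (i : Fin n) : Sym2 Vert := s(.inl (i, false), .inl (i, true))

lemma triEdge_eq (i : Fin n) (β : Bool) :
    (triEdge i : Sym2 Vert) = s(.inl (i, β), .inl (i, !β)) := by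
  cases β
  · rfl
  · exact Sym2.eq_swap

lemma exists_spoke_mem_edges {i : Fin n} {β : Bool} {v : Vert}
    (p : (windmillTail n m).Walk (.inl (i, β)) v) (hv : 0 < height v) :
    ∃ γ, spoke i γ ∈ p.edges := by
  obtain ⟨d, hd, ⟨γ, hγ⟩, hsnd⟩ :=
    p.exists_boundary_dart (Set.range fun γ => .inl (i, γ)) ⟨β, rfl⟩ fun ⟨_, h⟩ => by
      simp [← h, height] at hv
  have hmem : s(d.fst, d.snd) ∈ p.edges := List.mem_map_of_mem hd
  have hadj := d.adj
  rw [← hγ] at hadj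
  rcases hs : d.snd with ⟨j, δ⟩ | b <;> rw [hs] at hadj hsnd hmem
  · exact absurd ⟨δ, by rw [(adj_inl_inl.mp hadj).1]⟩ hsnd
  · rw [adj_inl_inr.mp hadj, ← hγ, Sym2.eq_swap] at hmem
    exact ⟨γ, hmem⟩

lemma spoke_mem_edges_or {i : Fin n} {β : Bool} {v : Vert}
    (p : (windmillTail n m).Walk (.inl (i, β)) v) (hv : 0 < height v) :
    spoke i β ∈ p.edges ∨ (spoke i (!β) ∈ p.edges ∧ triEdge i ∈ p.edges) := by
  cases p with
  | nil => simp [height] at hv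
  | @cons _ w _ h q =>
    simp only [Walk.edges_cons, List.mem_cons]
    rcases w with ⟨j, γ⟩ | b
    · obtain ⟨rfl, hβγ⟩ := adj_inl_inl.mp h
      obtain rfl : γ = !β := by cases β <;> cases γ <;> simp_all
      obtain ⟨δ, hδ⟩ := exists_spoke_mem_edges q hv
      obtain rfl | rfl : δ = β ∨ δ = !β := by cases δ <;> cases β <;> simp
      exacts [.inl (.inr hδ), .inr ⟨.inr hδ, .inl (triEdge_eq i β)⟩]
    · obtain rfl := adj_inl_inr.mp h
      exact .inl (.inl Sym2.eq_swap)

lemma tailEdge_mem_edgeSet {j : ℕ} (hj : j < m) : tailEdge j ∈ (windmillTail n m).edgeSet :=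
  adj_tailVert_succ (n := n) hj

lemma spoke_mem_edgeSet (i : Fin n) (β : Bool) : spoke i β ∈ (windmillTail n m).edgeSet := by
  simp [spoke]

lemma triEdge_mem_edgeSet (i : Fin n) : triEdge i ∈ (windmillTail n m).edgeSet := by
  simp [triEdge]

lemma tailEdge_injOn : Set.InjOn (tailEdge (n := n) (m := m)) (Set.Iio m) := fun a ha b hb h => by
  rw [← rcColouring_tailEdge 0 ha, ← rcColouring_tailEdge 0 hb, h]

variable {c : Sym2 ((Fin n × Bool) ⊕ Fin (m + 1)) → ℕ}

def tailColours (c : Sym2 Vert → ℕ) : Finset ℕ :=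
  (Finset.range m).image (c ∘ tailEdge)

lemma card_tailColours (hrc : (windmillTail n m).RainbowConnected c) :
    (tailColours c).card = m := by
  obtain ⟨p, -, hp⟩ := hrc (.inr 0) (.inr (Fin.last m))
  rw [tailColours, Finset.card_image_of_injOn, Finset.card_range]
  intro a ha b hb hab
  simp only [Finset.coe_range, Set.mem_Iio] at ha hb
  refine tailEdge_injOn ha hb (List.inj_on_of_nodup_map hp ?_ ?_ hab) <;>
    exact tailEdge_mem_edges p (by simp [height]) (by simp [height]; omega)

/-- The path runs through the whole tail, whose colours it therefore cannot repeat. -/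
lemma colour_not_mem_tailColours {u : Vert}
    {p : (windmillTail n m).Walk u (.inr (Fin.last m))} (hp : p.IsRainbow c) (hu : height u ≤ 1)
    {e : Sym2 Vert} (he : e ∈ p.edges) {q : Fin n × Bool}
    (hq : .inl q ∈ e) : c e ∉ tailColours c := by
  simp only [tailColours, Finset.mem_image, Finset.mem_range, Function.comp_apply, not_exists,
    not_and]
  intro j hj hce
  have hpath := tailEdge_mem_edges p (j := j) (by omega) (by simp [height]; omega)
  exact inl_not_mem_tailEdge q j (List.inj_on_of_nodup_map hp hpath he hce ▸ hq)

lemma colour_spoke_not_mem_tailColours_or (hrc : (windmillTail n m).RainbowConnected c)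
    (i : Fin n) (β : Bool) :
    c (spoke i β) ∉ tailColours c ∨
      (c (spoke i (!β)) ∉ tailColours c ∧ c (triEdge i) ∉ tailColours c) := by
  obtain ⟨p, -, hp⟩ := hrc (.inl (i, β)) (.inr (Fin.last m))
  have hu : height (.inl (i, β) : Vert) ≤ 1 := zero_le_one
  refine (spoke_mem_edges_or p (by simp [height])).imp (fun h => ?_) fun ⟨h, h'⟩ => ⟨?_, ?_⟩
  · exact colour_not_mem_tailColours hp hu h (Sym2.mem_mk_right _ _)
  · exact colour_not_mem_tailColours hp hu h (Sym2.mem_mk_right _ _)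
  · exact colour_not_mem_tailColours hp hu h' (Sym2.mem_mk_left _ _)

lemma add_card_le {K : ℕ} (hcol : (windmillTail n m).ColorsLE c K)
    (hrc : (windmillTail n m).RainbowConnected c) {B : Finset ℕ}
    (hB : ∀ x ∈ B, x < K ∧ x ∉ tailColours c) : m + B.card ≤ K := by
  have hdisj : Disjoint (tailColours c) B := Finset.disjoint_right.mpr fun x hx => (hB x hx).2
  have hpath : tailColours c ⊆ Finset.range K := by
    simp only [tailColours, Finset.image_subset_iff, Finset.mem_range, Function.comp_apply]
    exact fun j hj => hcol _ (tailEdge_mem_edgeSet hj)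
  calc m + B.card = (tailColours c ∪ B).card := by
        rw [Finset.card_union_of_disjoint hdisj, card_tailColours hrc]
    _ ≤ (Finset.range K).card :=
        Finset.card_le_card (Finset.union_subset hpath fun x hx => Finset.mem_range.mpr (hB x hx).1)
    _ = K := Finset.card_range K

lemma add_le_of_properRainbow {K : ℕ} (hcol : (windmillTail n m).ColorsLE c K)
    (hprop : (windmillTail n m).IsProperEdgeColoring c)
    (hrc : (windmillTail n m).RainbowConnected c) : m + n ≤ K := by
  have h i : ∃ β, c (spoke i β) ∉ tailColours c :=
    (colour_spoke_not_mem_tailColours_or hrc i false).elim (⟨_, ·⟩) fun h => ⟨_, h.1⟩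
  choose β hβ using h
  have hinj : Function.Injective fun i => c (spoke i (β i)) := fun i j hij => by
    by_contra hne
    exact hprop (by simp) (by simp) (by simp [hne]) hij
  simpa [Finset.card_image_of_injective _ hinj] using
    add_card_le hcol hrc (B := Finset.univ.image fun i => c (spoke i (β i)))
      (by simpa using fun i => ⟨hcol _ (spoke_mem_edgeSet i (β i)), hβ i⟩)

lemma add_two_le_of_properRainbow (hn : 0 < n) {K : ℕ} (hcol : (windmillTail n m).ColorsLE c K)
    (hprop : (windmillTail n m).IsProperEdgeColoring c)
    (hrc : (windmillTail n m).RainbowConnected c) : m + 2 ≤ K := by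
  let i : Fin n := ⟨0, hn⟩
  have hss : c (spoke i false) ≠ c (spoke i true) := hprop (by simp) (by simp) (by simp)
  have hst β : c (spoke i β) ≠ c (triEdge i) := by
    rw [spoke, Sym2.eq_swap, triEdge_eq i β]
    exact hprop (by simp) (by simp) (by simp)
  have hK {e} (he : e ∈ (windmillTail n m).edgeSet) (h : c e ∉ tailColours c) :
      c e < K ∧ c e ∉ tailColours c := ⟨hcol e he, h⟩
  obtain ⟨x, y, hxy, hx, hy⟩ : ∃ x y, x ≠ y ∧ (x < K ∧ x ∉ tailColours c) ∧
      (y < K ∧ y ∉ tailColours c) := by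
    rcases colour_spoke_not_mem_tailColours_or hrc i false with h1 | ⟨h1, h1'⟩
    · rcases colour_spoke_not_mem_tailColours_or hrc i true with h2 | ⟨-, h2'⟩
      · exact ⟨_, _, hss, hK (spoke_mem_edgeSet _ _) h1, hK (spoke_mem_edgeSet _ _) h2⟩
      · exact ⟨_, _, hst false, hK (spoke_mem_edgeSet _ _) h1, hK (triEdge_mem_edgeSet _) h2'⟩
    · exact ⟨_, _, hst true, hK (spoke_mem_edgeSet _ _) h1, hK (triEdge_mem_edgeSet _) h1'⟩
  simpa [Finset.card_pair hxy] using add_card_le hcol hrc (B := {x, y}) (by simp [hx, hy])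

end windmillTail

section

open windmillTail

variable {n m : ℕ}

theorem windmillTail_connected (hm : 0 < m) : (windmillTail n m).Connected where
  preconnected := (rainbowConnected_rcColouring (s := 1) hm (.inl one_pos)).preconnected
  nonempty := ⟨.inr 0⟩

theorem maxDegree_windmillTail (hn : 0 < n) (hm : 0 < m) :
    (windmillTail n m).maxDegree = 2 * n + 1 := by
  refine le_antisymm (maxDegree_le_of_forall_degree_le _ _ fun x => ?_)
    (degree_hub hm ▸ degree_le_maxDegree _ _)
  by_cases hx : x = .inr 0
  · rw [hx, degree_hub hm]
  · exact (degree_le_two hx).trans (by omega)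

theorem diam_windmillTail (hn : 0 < n) (hm : 0 < m) : (windmillTail n m).diam = m + 1 := by
  have hfin : (windmillTail n m).ediam ≠ ⊤ := ne_top_of_le_ne_top (by simp) (ediam_le hm)
  refine le_antisymm
    ((ENat.toNat_le_toNat (ediam_le hm) (by simp)).trans_eq (ENat.toNat_natCast _)) ?_
  obtain ⟨p, hp⟩ := (windmillTail_connected (n := n) hm).exists_walk_length_eq_dist
    (.inl (⟨0, hn⟩, false)) (.inr (Fin.last m))
  calc m + 1 ≤ p.length := by
        simpa [height] using p.apply_le_apply_add_length fun _ _ h => height_le_of_adj h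
    _ = (windmillTail n m).dist _ _ := hp
    _ ≤ (windmillTail n m).diam := dist_le_diam hfin

theorem rcNumber_windmillTail_le (hn : 0 < n) (hm : 0 < m) :
    (windmillTail n m).rcNumber ≤ m + min n 2 := by
  have h (s : ℕ) (hs : 0 < s ∨ n ≤ 1) : (windmillTail n m).rcNumber ≤ m + s + 1 :=
    rcNumber_le (fun e _ => Nat.lt_succ_of_le (rcColouring_le s e))
      (rainbowConnected_rcColouring hm hs)
  rcases Nat.lt_or_ge 1 n with hn2 | hn1
  · have := h 1 (.inl one_pos)
    omega
  · have := h 0 (.inr hn1)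
    omega

theorem add_max_le_prcNumber_windmillTail (hn : 0 < n) (hm : 0 < m) :
    m + max n 2 ≤ (windmillTail n m).prcNumber :=
  le_prcNumber (windmillTail_connected hm).preconnected fun _ _ hcol hprop hrc => by
    have := add_le_of_properRainbow hcol hprop hrc
    have := add_two_le_of_properRainbow hn hcol hprop hrc
    omega

end

end SimpleGraph

theorem stmt4_general (k t : ℕ) (ht : 1 ≤ t) :
    ∃ (V : Type) (instF : Fintype V) (G : SimpleGraph V) (instD : DecidableRel G.Adj),
      G.Connected ∧ @SimpleGraph.maxDegree V G instF instD = 2 * t ^ 2 + 1 ∧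
      G.diam = 2 * t ^ 2 + 1 + k ∧ G.rcNumber + t ≤ G.prcNumber := by
  have hn : 0 < t ^ 2 := by positivity
  have hm : 0 < 2 * t ^ 2 + k := by positivity
  refine ⟨_, inferInstance, windmillTail (t ^ 2) (2 * t ^ 2 + k), inferInstance,
    windmillTail_connected hm, maxDegree_windmillTail hn hm, ?_, ?_⟩
  · rw [diam_windmillTail hn hm]
    ring
  have hrc := rcNumber_windmillTail_le hn hm
  have hprc := add_max_le_prcNumber_windmillTail hn hm
  have hgap : t + min (t ^ 2) 2 ≤ max (t ^ 2) 2 := by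
    rcases ht.eq_or_lt with rfl | ht
    · simp
    · nlinarith [min_le_right (t ^ 2) 2, le_max_left (t ^ 2) 2]
  omega

theorem stmt4 (k t : ℕ) (ht : 1 ≤ t) (hkt : t ≤ k) :
    ∃ (V : Type) (instF : Fintype V) (G : SimpleGraph V) (instD : DecidableRel G.Adj),
      G.Connected ∧ @SimpleGraph.maxDegree V G instF instD = 2 * t ^ 2 + 1 ∧
      G.diam = 2 * t ^ 2 + 1 + k ∧ G.rcNumber + t ≤ G.prcNumber :=
  stmt4_general k t ht
end

section
/- Let G be a connected graph containing a cycle, with girth g(G). If rc(G) < g(G) - 2, then prc(G) = rc(G). -/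
open SimpleGraph

variable {V : Type*}

/-!
An optimal rainbow colouring with `k < g(G) - 2` colours is already proper. Indeed, if two edges
`uv` and `uw` had the same colour, the rainbow `v`–`w` path has length at most `k`, and adding `u`
closes a circuit of length at most `k + 2 < g(G)`: either the whole walk `u v … w u`, or, when the
path already runs through `u`, its piece between `u` and the endpoint whose edge to `u` it avoids.
-/

namespace SimpleGraph

variable {G : SimpleGraph V} {c : Sym2 V → ℕ} {k : ℕ}

namespace Walk

lemma IsRainbow.isTrail {u v : V} {p : G.Walk u v} (hp : p.IsRainbow c) : p.IsTrail :=
  ⟨hp.of_map c⟩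

lemma IsRainbow.length_le {u v : V} {p : G.Walk u v} (hp : p.IsRainbow c) (hc : G.ColorsLE c k) :
    p.length ≤ k := by
  have hsub : (p.edges.map c).Subperm (List.range k) :=
    List.subperm_of_subset hp fun x hx => by
      obtain ⟨e, he, rfl⟩ := List.mem_map.mp hx
      exact List.mem_range.mpr (hc e (p.edges_subset_edgeSet he))
  simpa using hsub.length_le

lemma IsTrail.girth_le_length_add_one {a b : V} {p : G.Walk a b} (hp : p.IsTrail)
    (hba : G.Adj b a) (he : s(a, b) ∉ p.edges) : G.girth ≤ p.length + 1 :=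
  IsCircuit.girth_le_length (w := cons hba p)
    ⟨(isTrail_cons hba p).mpr ⟨hp, by rwa [Sym2.eq_swap]⟩, nofun⟩

lemma IsTrail.girth_le_length_add_two {u v w : V} {p : G.Walk v w} (hp : p.IsTrail)
    (huv : G.Adj u v) (huw : G.Adj u w) (hvw : v ≠ w) (he : s(u, w) ∉ p.edges) :
    G.girth ≤ p.length + 2 := by
  classical
  by_cases hu : u ∈ p.support
  · have := (hp.dropUntil hu).girth_le_length_add_one huw.symm
      fun h => he (p.edges_dropUntil_subset_edges hu h)
    have := p.length_dropUntil_le_length hu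
    omega
  · have huv_mem : s(u, v) ∉ p.edges := fun h => hu (p.fst_mem_support_of_mem_edges h)
    have hq : (cons huv p).IsTrail := (isTrail_cons huv p).mpr ⟨hp, huv_mem⟩
    have := hq.girth_le_length_add_one huw.symm fun h => by
      rcases List.mem_cons.mp (edges_cons huv p ▸ h) with h | h
      · exact hvw (Sym2.congr_right.mp h).symm
      · exact he h
    simpa [add_assoc] using this

lemma IsRainbow.girth_le_length_add_two {u v w : V} {p : G.Walk v w} (hp : p.IsRainbow c)
    (huv : G.Adj u v) (huw : G.Adj u w) (hvw : v ≠ w) (hcol : c s(u, v) = c s(u, w)) :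
    G.girth ≤ p.length + 2 := by
  by_cases hw : s(u, w) ∈ p.edges
  · have hv : s(u, v) ∉ p.edges := fun hv =>
      hvw (Sym2.congr_right.mp (List.inj_on_of_nodup_map hp hv hw hcol))
    have := hp.isTrail.reverse.girth_le_length_add_two huw huv hvw.symm
      (by rwa [edges_reverse, List.mem_reverse])
    rwa [length_reverse] at this
  · exact hp.isTrail.girth_le_length_add_two huv huw hvw hw

end Walk

lemma RainbowConnected.isProperEdgeColoring (hrb : G.RainbowConnected c) (hc : G.ColorsLE c k)
    (hk : k + 2 < G.girth) : G.IsProperEdgeColoring c := by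
  intro u v w huv huw hvw hcol
  obtain ⟨p, -, hp⟩ := hrb v w
  have := hp.girth_le_length_add_two huv huw hvw hcol
  have := hp.length_le hc
  omega

lemma prcNumber_eq_rcNumber_of_forall_isProperEdgeColoring
    (h : ∀ c, G.ColorsLE c G.rcNumber → G.RainbowConnected c → G.IsProperEdgeColoring c) :
    G.prcNumber = G.rcNumber := by
  set S := {k | ∃ c : Sym2 V → ℕ, G.ColorsLE c k ∧ G.RainbowConnected c}
  set P := {k | ∃ c : Sym2 V → ℕ, G.ColorsLE c k ∧ G.IsProperEdgeColoring c ∧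
    G.RainbowConnected c}
  have hPS : P ⊆ S := fun k ⟨c, hc, _, hrb⟩ => ⟨c, hc, hrb⟩
  obtain hS | hS := S.eq_empty_or_nonempty
  · -- with no rainbow colouring at all, both numbers are the junk value `sInf ∅ = 0`
    change sInf P = sInf S
    rw [Set.subset_empty_iff.mp (hS ▸ hPS : P ⊆ ∅), hS]
  · obtain ⟨c, hc, hrb⟩ : G.rcNumber ∈ S := Nat.sInf_mem hS
    have hP : G.rcNumber ∈ P := ⟨c, hc, h c hc hrb, hrb⟩
    exact le_antisymm (Nat.sInf_le hP) (le_csInf ⟨_, hP⟩ fun _ hk => Nat.sInf_le (hPS hk))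

end SimpleGraph

theorem stmt7_general {V : Type*} (G : SimpleGraph V) (hrc : G.rcNumber < G.girth - 2) :
    G.prcNumber = G.rcNumber :=
  G.prcNumber_eq_rcNumber_of_forall_isProperEdgeColoring fun _ hc hrb =>
    hrb.isProperEdgeColoring hc (by omega)

theorem stmt7 {V : Type*} [Fintype V] (G : SimpleGraph V) (hconn : G.Connected)
    (hcyc : ¬ G.IsAcyclic) (hrc : G.rcNumber < G.girth - 2) :
    G.prcNumber = G.rcNumber :=
  stmt7_general G hrc
end

section
/- For every integer n ≥ 4, the wheel W_n satisfies prc(W_n) = n. -/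
open SimpleGraph

variable {V : Type*}

/-- The wheel `W n`: a cycle on `n` vertices together with a hub adjacent to all of them. -/
def wheel (n : ℕ) : SimpleGraph (Option (Fin n)) :=
  SimpleGraph.fromRel fun a b =>
    a = none ∨ ∃ i j : Fin n, a = some i ∧ b = some j ∧ (SimpleGraph.cycleGraph n).Adj i j

/-! The hub of `W_n` has `n` neighbours, so a proper colouring needs at least `n` colours.
Conversely, colour the spoke to rim vertex `i` by `i` and the rim edge `{i, i + 1}` by `i + 2`
(mod `n`). At rim vertex `i` the three edges get the colours `i`, `i + 2`, `i + 1`, so the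
colouring is proper as soon as `n ≥ 3`, and any two rim vertices `i ≠ j` are joined by the
rainbow path `i, hub, j` with colours `i ≠ j`. -/

namespace SimpleGraph

variable {G : SimpleGraph V} {c : Sym2 V → ℕ} {k : ℕ}

theorem IsProperEdgeColoring.card_le_of_forall_adj (hc : G.IsProperEdgeColoring c)
    (hk : G.ColorsLE c k) {v : V} {s : Finset V} (hs : ∀ w ∈ s, G.Adj v w) : s.card ≤ k := by
  simpa using Finset.card_le_card_of_injOn (fun w => c s(v, w))
    (fun w hw => Finset.mem_range.2 (hk _ (hs w hw)))
    (fun u hu w hw huw => by_contra fun hne => hc (hs u hu) (hs w hw) hne huw)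

theorem rainbowConnected_of_forall_adj {v : V} (hadj : ∀ w ≠ v, G.Adj v w)
    (hinj : Set.InjOn (fun w => c s(v, w)) {v}ᶜ) : G.RainbowConnected c := by
  intro x y
  by_cases hxy : x = y
  · subst hxy
    exact ⟨.nil, .nil, by simp [Walk.IsRainbow]⟩
  by_cases hx : x = v
  · subst hx
    exact ⟨(hadj y (Ne.symm hxy)).toWalk, by simp [hxy], by simp [Walk.IsRainbow]⟩
  by_cases hy : y = v
  · subst hy
    exact ⟨(hadj x hx).symm.toWalk, by simp [hxy], by simp [Walk.IsRainbow]⟩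
  refine ⟨.cons (hadj x hx).symm (hadj y hy).toWalk, ?_, ?_⟩
  · simp [Walk.isPath_def, hxy, hx, Ne.symm hy]
  · simpa [Walk.IsRainbow, Sym2.eq_swap] using fun h => hxy (hinj hx hy h)

theorem prcNumber_eq_card_of_forall_adj {v : V} {s : Finset V} (hs : ∀ w ∈ s, G.Adj v w)
    (hk : G.ColorsLE c s.card) (hc : G.IsProperEdgeColoring c) (hr : G.RainbowConnected c) :
    G.prcNumber = s.card :=
  le_antisymm (Nat.sInf_le ⟨c, hk, hc, hr⟩)
    (le_csInf ⟨_, c, hk, hc, hr⟩ fun _ ⟨_, hk', hc', _⟩ => hc'.card_le_of_forall_adj hk' hs)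

end SimpleGraph

theorem wheel_adj_none_some {n : ℕ} (i : Fin n) : (wheel n).Adj none (some i) := by
  simp [wheel]

theorem wheel_adj_some_some {n : ℕ} {i j : Fin n} :
    (wheel n).Adj (some i) (some j) ↔ (cycleGraph n).Adj i j := by
  simp only [wheel, fromRel_adj, ne_eq, Option.some.injEq, reduceCtorEq, false_or,
    exists_and_left, exists_eq_left']
  exact ⟨fun ⟨_, h⟩ => h.elim id .symm, fun h => ⟨h.ne, .inl h⟩⟩

theorem wheel_adj_some_iff {n : ℕ} {i : Fin (n + 2)} {w : Option (Fin (n + 2))} :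
    (wheel (n + 2)).Adj (some i) w ↔ w = none ∨ w = some (i - 1) ∨ w = some (i + 1) := by
  cases w with
  | none => simpa using (wheel_adj_none_some i).symm
  | some j =>
    rw [wheel_adj_some_some, ← mem_neighborSet, cycleGraph_neighborSet]
    simp

section WheelColouring

variable {n : ℕ}

theorem Fin.self_ne_add_one_add_one (i : Fin (n + 3)) : i ≠ i + 1 + 1 := by
  rw [add_assoc, ne_eq, left_eq_add]
  exact two_ne_zero

def wheelColour (n : ℕ) : Option (Fin (n + 3)) → Option (Fin (n + 3)) → ℕ
  | none, none => 0
  | none, some i | some i, none => i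
  | some i, some j => if j = i + 1 then ↑(i + 2) else if i = j + 1 then ↑(j + 2) else 0

theorem wheelColour_comm (a b : Option (Fin (n + 3))) : wheelColour n a b = wheelColour n b a := by
  cases a <;> cases b <;> simp only [wheelColour]
  rename_i i j
  split_ifs <;> first | rfl | subst_vars; exact absurd ‹_› (Fin.self_ne_add_one_add_one _)

def wheelColouring (n : ℕ) : Sym2 (Option (Fin (n + 3))) → ℕ :=
  Sym2.lift ⟨wheelColour n, wheelColour_comm⟩

@[simp]
theorem wheelColouring_none_some (i : Fin (n + 3)) : wheelColouring n s(none, some i) = i := rfl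

@[simp]
theorem wheelColouring_some_none (i : Fin (n + 3)) : wheelColouring n s(some i, none) = i := rfl

@[simp]
theorem wheelColouring_some_add_one (i : Fin (n + 3)) :
    wheelColouring n s(some i, some (i + 1)) = ↑(i + 2) :=
  if_pos rfl

@[simp]
theorem wheelColouring_some_sub_one (i : Fin (n + 3)) :
    wheelColouring n s(some i, some (i - 1)) = ↑(i + 1) := by
  have h := wheelColouring_some_add_one (i - 1)
  rw [sub_add_cancel, Sym2.eq_swap] at h
  rw [h]
  change ((i - 1 + (1 + 1) : Fin (n + 3)) : ℕ) = _
  rw [← add_assoc, sub_add_cancel]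

theorem wheelColouring_colorsLE : (wheel (n + 3)).ColorsLE (wheelColouring n) (n + 3) := by
  intro e _
  induction e using Sym2.ind with
  | _ a b =>
    cases a <;> cases b <;> simp only [wheelColouring, Sym2.lift_mk, wheelColour] <;>
      (try split_ifs) <;> first | exact Fin.isLt _ | omega

theorem isProperEdgeColoring_wheelColouring :
    (wheel (n + 3)).IsProperEdgeColoring (wheelColouring n) := by
  rintro (_ | i) v w hv hw hvw
  · rcases v with _ | j
    · exact absurd rfl hv.ne
    rcases w with _ | k
    · exact absurd rfl hw.ne
    simpa [Fin.val_inj] using hvw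
  · rw [wheel_adj_some_iff] at hv hw
    rcases hv with rfl | rfl | rfl <;> rcases hw with rfl | rfl | rfl <;>
      simp [Fin.val_inj] at hvw ⊢
    all_goals simp [Fin.ext_iff, Nat.mod_eq_of_lt]

theorem rainbowConnected_wheelColouring :
    (wheel (n + 3)).RainbowConnected (wheelColouring n) := by
  refine rainbowConnected_of_forall_adj (v := none) ?_ ?_
  · rintro (_ | i) h
    · exact absurd rfl h
    · exact wheel_adj_none_some i
  · rintro (_ | i) hi (_ | j) hj h <;> simp_all [Fin.val_inj]

end WheelColouring

theorem stmt9 (n : ℕ) (hn : 4 ≤ n) : (wheel n).prcNumber = n := by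
  obtain ⟨m, rfl⟩ : ∃ m, n = m + 3 := ⟨n - 3, by omega⟩
  have hspokes : ∀ w ∈ Finset.univ.map .some, (wheel (m + 3)).Adj none w := by
    simp [wheel_adj_none_some]
  simpa using prcNumber_eq_card_of_forall_adj hspokes
    (by simpa using wheelColouring_colorsLE) isProperEdgeColoring_wheelColouring
    rainbowConnected_wheelColouring
end

section
/- For all positive integers s and t, the complete bipartite graph K_{s,t} satisfies prc(K_{s,t}) = max{s, t}. -/
open SimpleGraph

variable {V : Type*}

section
variable (s t : ℕ)

noncomputable def myf : Fin s ⊕ Fin t → ℕ := Sum.elim Fin.val Fin.val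

noncomputable def myc : Sym2 (Fin s ⊕ Fin t) → ℕ :=
  Sym2.lift ⟨fun u v => (myf s t u + myf s t v) % max s t, fun u v => by
    simp [Nat.add_comm]⟩

lemma myc_mk (u v : Fin s ⊕ Fin t) :
    myc s t s(u, v) = (myf s t u + myf s t v) % max s t := rfl

lemma myf_lt (u : Fin s ⊕ Fin t) : myf s t u < max s t := by
  rcases u with i | i <;> simp [myf]

lemma myf_inj {u v : Fin s ⊕ Fin t} (h : myf s t u = myf s t v)
    (hside : u.isLeft = v.isLeft) : u = v := by
  rcases u with i | i <;> rcases v with j | j <;> simp_all [myf] <;> exact Fin.ext h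

lemma myc_proper : (completeBipartiteGraph (Fin s) (Fin t)).IsProperEdgeColoring (myc s t) := by
  intro u v w huv huw hvw heq
  rw [myc_mk, myc_mk] at heq
  have h1 := myf_lt s t v
  have h2 := myf_lt s t w
  have hmod : myf s t v % max s t = myf s t w % max s t :=
    Nat.ModEq.add_left_cancel' (myf s t u) heq
  have : myf s t v = myf s t w := by
    rwa [Nat.mod_eq_of_lt h1, Nat.mod_eq_of_lt h2] at hmod
  apply hvw
  apply myf_inj s t this
  rcases u with i | i <;> rcases v with j | j <;> rcases w with l | l <;> simp_all

lemma myc_colors : (completeBipartiteGraph (Fin s) (Fin t)).ColorsLE (myc s t) (max s t) := by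
  intro e _
  induction e using Sym2.inductionOn with
  | hf u v =>
    rw [myc_mk]
    have := myf_lt s t u
    exact Nat.mod_lt _ (by omega)

lemma myc_rainbow (hs : 1 ≤ s) (ht : 1 ≤ t) :
    (completeBipartiteGraph (Fin s) (Fin t)).RainbowConnected (myc s t) := by
  intro u v
  by_cases huv : u = v
  · subst huv
    exact ⟨.nil, Walk.IsPath.nil, by simp [Walk.IsRainbow]⟩
  rcases u with i | i <;> rcases v with j | j
  · -- left-left, go through inr 0
    have h1 : (completeBipartiteGraph (Fin s) (Fin t)).Adj (.inl i) (.inr ⟨0, ht⟩) := by simp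
    have h2 : (completeBipartiteGraph (Fin s) (Fin t)).Adj (.inr ⟨0, ht⟩) (.inl j) := by simp
    refine ⟨.cons h1 (.cons h2 .nil), ?_, ?_⟩
    · simp [Walk.isPath_def]
      exact fun h => huv (by simp [h])
    · simp [Walk.IsRainbow, myc_mk, myf]
      have hij : i.val ≠ j.val := fun h => huv (by simp [Fin.ext h])
      have hi : i.val % max s t = i.val := Nat.mod_eq_of_lt (by omega)
      have hj : j.val % max s t = j.val := Nat.mod_eq_of_lt (by omega)
      have hij : i.val ≠ j.val := fun h => huv (by simp [Fin.ext h])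
      omega
  · have h : (completeBipartiteGraph (Fin s) (Fin t)).Adj (.inl i) (.inr j) := by simp
    exact ⟨.cons h .nil, by simp [Walk.isPath_def], by simp [Walk.IsRainbow]⟩
  · have h : (completeBipartiteGraph (Fin s) (Fin t)).Adj (.inr i) (.inl j) := by simp
    exact ⟨.cons h .nil, by simp [Walk.isPath_def], by simp [Walk.IsRainbow]⟩
  · have h1 : (completeBipartiteGraph (Fin s) (Fin t)).Adj (.inr i) (.inl ⟨0, hs⟩) := by simp
    have h2 : (completeBipartiteGraph (Fin s) (Fin t)).Adj (.inl ⟨0, hs⟩) (.inr j) := by simp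
    refine ⟨.cons h1 (.cons h2 .nil), ?_, ?_⟩
    · simp [Walk.isPath_def]
      exact fun h => huv (by simp [h])
    · simp [Walk.IsRainbow, myc_mk, myf]
      have hij : i.val ≠ j.val := fun h => huv (by simp [Fin.ext h])
      have hi : i.val % max s t = i.val := Nat.mod_eq_of_lt (by omega)
      have hj : j.val % max s t = j.val := Nat.mod_eq_of_lt (by omega)
      have hij : i.val ≠ j.val := fun h => huv (by simp [Fin.ext h])
      omega
end


theorem stmt10 (s t : ℕ) (hs : 1 ≤ s) (ht : 1 ≤ t) :
    (completeBipartiteGraph (Fin s) (Fin t)).prcNumber = max s t := by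
  have hmem : max s t ∈ {k | ∃ c : Sym2 (Fin s ⊕ Fin t) → ℕ,
      (completeBipartiteGraph (Fin s) (Fin t)).ColorsLE c k ∧
      (completeBipartiteGraph (Fin s) (Fin t)).IsProperEdgeColoring c ∧
      (completeBipartiteGraph (Fin s) (Fin t)).RainbowConnected c} :=
    ⟨myc s t, myc_colors s t, myc_proper s t, myc_rainbow s t hs ht⟩
  refine le_antisymm (Nat.sInf_le hmem) (le_csInf ⟨_, hmem⟩ ?_)
  rintro k ⟨c, hle, hproper, -⟩
  have hsk : s ≤ k := by
    have hinj : Function.Injective (fun i : Fin s =>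
        (⟨c s(Sum.inr ⟨0, ht⟩, Sum.inl i), hle _ (by simp)⟩ : Fin k)) := by
      intro i j h
      simp only [Fin.mk.injEq] at h
      by_contra hij
      exact hproper (by simp : (completeBipartiteGraph (Fin s) (Fin t)).Adj (.inr ⟨0, ht⟩) (.inl i))
        (by simp) (fun he => hij (by simpa using he)) h
    simpa using Fintype.card_le_of_injective _ hinj
  have htk : t ≤ k := by
    have hinj : Function.Injective (fun j : Fin t =>
        (⟨c s(Sum.inl ⟨0, hs⟩, Sum.inr j), hle _ (by simp)⟩ : Fin k)) := by
      intro i j h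
      simp only [Fin.mk.injEq] at h
      by_contra hij
      exact hproper (by simp : (completeBipartiteGraph (Fin s) (Fin t)).Adj (.inl ⟨0, hs⟩) (.inr i))
        (by simp) (fun he => hij (by simpa using he)) h
    simpa using Fintype.card_le_of_injective _ hinj
  omega
end

section
/- Let G be a connected graph of order n ≥ 2 with minimum degree δ(G) ≥ (n-1)/2. Then prc(G) = χ'(G). -/
open SimpleGraph

variable {V : Type*}

/-!
The degree condition forces diameter at most 2: two non-adjacent vertices have their
neighbourhoods inside the other `n - 2` vertices, and `2δ ≥ n - 1 > n - 2`, so the neighbourhoods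
meet. On a path with at most two edges, a proper colouring is automatically rainbow, so every
proper edge colouring of `G` rainbow-connects it, and the two minima defining `prc(G)` and
`χ'(G)` range over the same colourings.
-/

namespace SimpleGraph

variable {G : SimpleGraph V}

lemma edist_le_two_of_card_le_degree_add_degree [Fintype V] [DecidableRel G.Adj] {u v : V}
    (h : Fintype.card V ≤ G.degree u + G.degree v + 1) : G.edist u v ≤ 2 := by
  classical
  by_contra! hlt
  obtain ⟨huv, hadj, hcommon⟩ := G.two_lt_edist_iff.mp hlt
  have hpair : ({u, v} : Finset V).card = 2 := Finset.card_pair huv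
  have hn : 2 ≤ Fintype.card V := hpair ▸ Finset.card_le_univ _
  obtain ⟨w, hw⟩ := Finset.inter_nonempty_of_card_lt_card_add_card
    (s := ({u, v} : Finset V)ᶜ) (t := G.neighborFinset u) (u := G.neighborFinset v)
    (fun x hx => by grind [mem_neighborFinset, Finset.mem_compl, Adj.ne, Adj.symm])
    (fun x hx => by grind [mem_neighborFinset, Finset.mem_compl, Adj.ne, Adj.symm])
    (by rw [Finset.card_compl, hpair, card_neighborFinset_eq_degree,
      card_neighborFinset_eq_degree]; omega)
  rw [Finset.mem_inter, mem_neighborFinset, mem_neighborFinset] at hw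
  exact (Set.eq_empty_iff_forall_notMem.mp hcommon) w (G.mem_commonNeighbors.mpr hw)

lemma ediam_le_two_of_card_le_two_mul_minDegree_add_one [Fintype V] [DecidableRel G.Adj]
    (h : Fintype.card V ≤ 2 * G.minDegree + 1) : G.ediam ≤ 2 :=
  ediam_le_of_edist_le fun u v => edist_le_two_of_card_le_degree_add_degree <| by
    have := G.minDegree_le_degree u
    have := G.minDegree_le_degree v
    omega

lemma Walk.IsPath.isRainbow_of_length_le_two {c : Sym2 V → ℕ} (hc : G.IsProperEdgeColoring c)
    {u v : V} {p : G.Walk u v} (hp : p.IsPath) (hlen : p.length ≤ 2) : p.IsRainbow c := by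
  match p with
  | .nil => simp [Walk.IsRainbow]
  | .cons _ .nil => simp [Walk.IsRainbow]
  | .cons huw (.cons hwv .nil) =>
    have huv : u ≠ v := by rintro rfl; simp at hp
    simp [Walk.IsRainbow, Sym2.eq_swap (a := u), hc huw.symm hwv huv]
  | .cons _ (.cons _ (.cons _ _)) => simp at hlen

lemma rainbowConnected_of_ediam_le_two (h : G.ediam ≤ 2) {c : Sym2 V → ℕ}
    (hc : G.IsProperEdgeColoring c) : G.RainbowConnected c := by
  intro u v
  have hdist : G.edist u v ≤ 2 := edist_le_ediam.trans h
  have hreach : G.Reachable u v :=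
    reachable_of_edist_ne_top (ne_top_of_le_ne_top (by simp) hdist)
  obtain ⟨p, hp, hlen⟩ := hreach.exists_path_of_dist
  refine ⟨p, hp, hp.isRainbow_of_length_le_two hc ?_⟩
  rw [← hreach.coe_dist_eq_edist] at hdist
  exact hlen ▸ mod_cast hdist

lemma prcNumber_eq_chromaticIndex_of_forall_rainbowConnected
    (h : ∀ c, G.IsProperEdgeColoring c → G.RainbowConnected c) :
    G.prcNumber = G.chromaticIndex := by
  unfold prcNumber chromaticIndex
  congr 1
  ext k
  exact ⟨fun ⟨c, hk, hc, _⟩ => ⟨c, hk, hc⟩, fun ⟨c, hk, hc⟩ => ⟨c, hk, hc, h c hc⟩⟩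

end SimpleGraph

theorem stmt12_general {V : Type*} [Fintype V] (G : SimpleGraph V) [DecidableRel G.Adj]
    (hδ : Fintype.card V - 1 ≤ 2 * G.minDegree) :
    G.prcNumber = G.chromaticIndex :=
  prcNumber_eq_chromaticIndex_of_forall_rainbowConnected fun _ =>
    rainbowConnected_of_ediam_le_two <|
      ediam_le_two_of_card_le_two_mul_minDegree_add_one (by omega)

theorem stmt12 {V : Type*} [Fintype V] [DecidableEq V] (G : SimpleGraph V) [DecidableRel G.Adj]
    (hconn : G.Connected) (hn : 2 ≤ Fintype.card V)
    (hδ : Fintype.card V - 1 ≤ 2 * G.minDegree) :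
    G.prcNumber = G.chromaticIndex :=
  stmt12_general G hδ
end

section
/- Let G be a connected graph of order n ≥ 9 with minimum degree δ(G) ≥ (n-2)/2. Then prc(G) = χ'(G). -/
open SimpleGraph

variable {V : Type*}

section Aux

open Finset

variable {V : Type*}

lemma aux_rainbow [Fintype V] [DecidableEq V] (G : SimpleGraph V)
    [DecidableRel G.Adj] (hconn : G.Connected) (hn : 9 ≤ Fintype.card V)
    (hδ : Fintype.card V - 2 ≤ 2 * G.minDegree) (c : Sym2 V → ℕ)
    (hc : G.IsProperEdgeColoring c) : G.RainbowConnected c := by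
  intro u v
  by_cases huv : u = v
  · subst huv
    exact ⟨SimpleGraph.Walk.nil, by simp, by simp [SimpleGraph.Walk.IsRainbow]⟩
  by_cases hadj : G.Adj u v
  · exact ⟨SimpleGraph.Walk.cons hadj SimpleGraph.Walk.nil, by simp [huv],
      by simp [SimpleGraph.Walk.IsRainbow]⟩
  by_cases hcom : ∃ w, G.Adj u w ∧ G.Adj w v
  · obtain ⟨w, hw1, hw2⟩ := hcom
    have hwu : w ≠ u := fun h => G.irrefl (h ▸ hw1)
    have hwv : w ≠ v := fun h => G.irrefl (h ▸ hw2)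
    refine ⟨SimpleGraph.Walk.cons hw1 (SimpleGraph.Walk.cons hw2 SimpleGraph.Walk.nil), ?_, ?_⟩
    · simp [SimpleGraph.Walk.isPath_def, huv, hwu.symm, hwv]
    · have h12 : c s(w, u) ≠ c s(w, v) := hc hw1.symm hw2 huv
      rw [Sym2.eq_swap] at h12
      simpa [SimpleGraph.Walk.IsRainbow] using h12
  push_neg at hcom
  by_contra hno
  push_neg at hno
  set A := G.neighborFinset u with hA
  set B := G.neighborFinset v with hB
  have hmemA : ∀ w, w ∈ A ↔ G.Adj u w := fun w => G.mem_neighborFinset u w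
  have hmemB : ∀ w, w ∈ B ↔ G.Adj v w := fun w => G.mem_neighborFinset v w
  have hdisj : Disjoint A B := by
    rw [Finset.disjoint_left]
    intro w hw hwB
    exact hcom w ((hmemA w).1 hw) ((hmemB w).1 hwB).symm
  have huA : u ∉ A := by simp [hmemA]
  have hvB : v ∉ B := by simp [hmemB]
  have huB : u ∉ B := fun h => hadj ((hmemB u).1 h).symm
  have hvA : v ∉ A := fun h => hadj ((hmemA v).1 h)
  have hAcard : G.minDegree ≤ A.card := by
    rw [hA, SimpleGraph.card_neighborFinset_eq_degree]
    exact G.minDegree_le_degree u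
  have hBcard : G.minDegree ≤ B.card := by
    rw [hB, SimpleGraph.card_neighborFinset_eq_degree]
    exact G.minDegree_le_degree v
  have hsub : A ∪ B ⊆ univ \ {u, v} := by
    intro w hw
    rcases Finset.mem_union.1 hw with h | h
    · simp only [Finset.mem_sdiff, Finset.mem_univ, Finset.mem_insert, Finset.mem_singleton,
        true_and]
      push_neg
      exact ⟨fun e => huA (e ▸ h), fun e => hvA (e ▸ h)⟩
    · simp only [Finset.mem_sdiff, Finset.mem_univ, Finset.mem_insert, Finset.mem_singleton,
        true_and]
      push_neg
      exact ⟨fun e => huB (e ▸ h), fun e => hvB (e ▸ h)⟩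
  have hcard2 : (univ \ ({u, v} : Finset V)).card = Fintype.card V - 2 := by
    rw [Finset.card_sdiff_of_subset (Finset.subset_univ _), Finset.card_univ, Finset.card_pair huv]
  have hABcard : (A ∪ B).card = A.card + B.card := Finset.card_union_of_disjoint hdisj
  have hle : A.card + B.card ≤ Fintype.card V - 2 := by
    rw [← hABcard, ← hcard2]; exact Finset.card_le_card hsub
  have hAuB : A ∪ B = univ \ {u, v} :=
    Finset.eq_of_subset_of_card_le hsub (by omega)
  have hd4 : 4 ≤ G.minDegree := by omega
  have hmem : ∀ w, w ≠ u → w ≠ v → w ∈ A ∨ w ∈ B := by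
    intro w h1 h2
    have : w ∈ A ∪ B := by
      rw [hAuB]
      simp [h1, h2]
    exact Finset.mem_union.1 this
  -- every A-B edge has matching end colours
  have H3 : ∀ a ∈ A, ∀ b ∈ B, G.Adj a b → c s(u, a) = c s(b, v) := by
    intro a ha b hb hab
    by_contra hne3
    have hua : G.Adj u a := (hmemA a).1 ha
    have hbv : G.Adj b v := ((hmemB b).1 hb).symm
    have hab' : a ≠ b := fun e => Finset.disjoint_left.1 hdisj ha (by rw [e]; exact hb)
    have hub : u ≠ b := fun e => huB (e ▸ hb)
    have hav : a ≠ v := fun e => hvA (e ▸ ha)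
    have hau : u ≠ a := fun e => huA (e ▸ ha)
    have hbv' : b ≠ v := fun e => hvB (e ▸ hb)
    refine hno (SimpleGraph.Walk.cons hua (SimpleGraph.Walk.cons hab
      (SimpleGraph.Walk.cons hbv SimpleGraph.Walk.nil))) ?_ ?_
    · simp [SimpleGraph.Walk.isPath_def, hau, hub, huv, hab', hav, hbv']
    · have e12 : c s(a, u) ≠ c s(a, b) := hc hua.symm hab hub
      rw [Sym2.eq_swap] at e12
      have e23 : c s(b, a) ≠ c s(b, v) := hc hab.symm hbv hav
      rw [Sym2.eq_swap] at e23
      simp only [SimpleGraph.Walk.IsRainbow, SimpleGraph.Walk.edges_cons,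
        SimpleGraph.Walk.edges_nil, List.map_cons, List.map_nil]
      simp [List.nodup_cons, e12, hne3, e23]
  -- find an A-B edge using connectivity
  obtain ⟨p⟩ := hconn.preconnected u v
  obtain ⟨d, _, hfst, hsnd⟩ := p.exists_boundary_dart (↑(insert u A) : Set V)
    (by simp) (by simp [hvA, Ne.symm huv])
  simp only [Finset.coe_insert, Set.mem_insert_iff, Finset.mem_coe] at hfst hsnd
  push_neg at hsnd
  have ha : d.fst ∈ A := by
    rcases hfst with h | h
    · exfalso
      exact hsnd.2 ((hmemA d.snd).2 (h ▸ d.adj))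
    · exact h
  have hb : d.snd ∈ B := by
    have h2 : d.snd ≠ v → False → True := fun _ _ => trivial
    have hsndv : d.snd ≠ v := by
      intro e
      have : d.fst ∈ B := (hmemB d.fst).2 (e ▸ d.adj).symm
      exact Finset.disjoint_left.1 hdisj ha this
    rcases hmem d.snd hsnd.1 hsndv with h | h
    · exact absurd h hsnd.2
    · exact h
  set a := d.fst
  set b := d.snd
  have hab : G.Adj a b := d.adj
  have hcab : c s(u, a) = c s(b, v) := H3 a ha b hb hab
  set Na := G.neighborFinset a with hNa
  have hmemNa : ∀ w, w ∈ Na ↔ G.Adj a w := fun w => G.mem_neighborFinset a w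
  -- a has at most one neighbour in B
  have hBle : (Na ∩ B).card ≤ 1 := by
    rw [Finset.card_le_one]
    intro b1 hb1 b2 hb2
    by_contra hb12
    have h1 := H3 a ha b1 (Finset.mem_inter.1 hb1).2 ((hmemNa b1).1 (Finset.mem_inter.1 hb1).1)
    have h2 := H3 a ha b2 (Finset.mem_inter.1 hb2).2 ((hmemNa b2).1 (Finset.mem_inter.1 hb2).1)
    have hb1v : G.Adj v b1 := (hmemB b1).1 (Finset.mem_inter.1 hb1).2
    have hb2v : G.Adj v b2 := (hmemB b2).1 (Finset.mem_inter.1 hb2).2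
    have := hc hb1v hb2v hb12
    rw [Sym2.eq_swap, show s(v, b2) = s(b2, v) from Sym2.eq_swap] at this
    exact this (h1 ▸ h2 ▸ rfl)
  -- hence at least two neighbours in A
  have hNasub : Na ⊆ insert u ((Na ∩ A) ∪ (Na ∩ B)) := by
    intro w hw
    by_cases hwu : w = u
    · simp [hwu]
    have hwv : w ≠ v := by
      intro e
      have hav2 : G.Adj a v := e ▸ (hmemNa w).1 hw
      exact Finset.disjoint_left.1 hdisj ha ((hmemB a).2 hav2.symm)
    rcases hmem w hwu hwv with h | h
    · exact Finset.mem_insert_of_mem (Finset.mem_union_left _ (Finset.mem_inter.2 ⟨hw, h⟩))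
    · exact Finset.mem_insert_of_mem (Finset.mem_union_right _ (Finset.mem_inter.2 ⟨hw, h⟩))
  have hdegNa : G.minDegree ≤ Na.card := by
    rw [hNa, SimpleGraph.card_neighborFinset_eq_degree]
    exact G.minDegree_le_degree a
  have hA2 : 2 ≤ (Na ∩ A).card := by
    have h1 : Na.card ≤ (insert u ((Na ∩ A) ∪ (Na ∩ B))).card := Finset.card_le_card hNasub
    have h2 : (insert u ((Na ∩ A) ∪ (Na ∩ B))).card ≤ 1 + ((Na ∩ A).card + (Na ∩ B).card) := by
      calc (insert u ((Na ∩ A) ∪ (Na ∩ B))).card ≤ ((Na ∩ A) ∪ (Na ∩ B)).card + 1 :=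
            Finset.card_insert_le _ _
        _ ≤ ((Na ∩ A).card + (Na ∩ B).card) + 1 := by
            exact Nat.add_le_add_right (Finset.card_union_le _ _) 1
        _ = 1 + ((Na ∩ A).card + (Na ∩ B).card) := by omega
    omega
  obtain ⟨a1, ha1, a2, ha2, ha12⟩ := Finset.one_lt_card.1 hA2
  -- every A-neighbour a' of a satisfies c s(u,a') = c s(a,b)
  have H4 : ∀ a' ∈ Na ∩ A, c s(u, a') = c s(a, b) := by
    intro a' ha'
    obtain ⟨ha'Na, ha'A⟩ := Finset.mem_inter.1 ha'
    by_contra hne4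
    have hua' : G.Adj u a' := (hmemA a').1 ha'A
    have haa' : G.Adj a a' := (hmemNa a').1 ha'Na
    have hbv : G.Adj b v := ((hmemB b).1 hb).symm
    have hua : G.Adj u a := (hmemA a).1 ha
    -- distinctness
    have n_ua' : u ≠ a' := fun e => huA (e ▸ ha'A)
    have n_ua : u ≠ a := fun e => huA (e ▸ ha)
    have n_ub : u ≠ b := fun e => huB (e ▸ hb)
    have n_a'a : a' ≠ a := fun e => G.irrefl (e ▸ haa')
    have n_a'b : a' ≠ b := fun e => Finset.disjoint_left.1 hdisj ha'A (by rw [e]; exact hb)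
    have n_a'v : a' ≠ v := fun e => hvA (e ▸ ha'A)
    have n_ab : a ≠ b := fun e => Finset.disjoint_left.1 hdisj ha (by rw [e]; exact hb)
    have n_av : a ≠ v := fun e => hvA (e ▸ ha)
    have n_bv : b ≠ v := fun e => hvB (e ▸ hb)
    refine hno (SimpleGraph.Walk.cons hua' (SimpleGraph.Walk.cons haa'.symm
      (SimpleGraph.Walk.cons hab (SimpleGraph.Walk.cons hbv SimpleGraph.Walk.nil)))) ?_ ?_
    · simp [SimpleGraph.Walk.isPath_def, n_ua', n_ua, n_ub, huv, n_a'a, n_a'b, n_a'v,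
        n_ab, n_av, n_bv]
    · -- rainbow
      have x12 : c s(u, a') ≠ c s(a', a) := by
        have := hc hua'.symm haa'.symm n_ua
        rwa [Sym2.eq_swap] at this
      have x13 : c s(u, a') ≠ c s(a, b) := hne4
      have x14 : c s(u, a') ≠ c s(b, v) := by
        rw [← hcab]
        exact hc hua' hua n_a'a
      have x23 : c s(a', a) ≠ c s(a, b) := by
        have := hc haa' hab n_a'b
        rwa [show s(a, a') = s(a', a) from Sym2.eq_swap] at this
      have x24 : c s(a', a) ≠ c s(b, v) := by
        rw [← hcab]
        have := hc haa' hua.symm (Ne.symm n_ua')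
        rwa [show s(a, a') = s(a', a) from Sym2.eq_swap,
          show s(a, u) = s(u, a) from Sym2.eq_swap] at this
      have x34 : c s(a, b) ≠ c s(b, v) := by
        have := hc hab.symm hbv n_av
        rwa [show s(b, a) = s(a, b) from Sym2.eq_swap] at this
      simp only [SimpleGraph.Walk.IsRainbow, SimpleGraph.Walk.edges_cons,
        SimpleGraph.Walk.edges_nil, List.map_cons, List.map_nil]
      simp [List.nodup_cons, x12, x13, x14, x23, x24, x34]
  have e1 := H4 a1 ha1
  have e2 := H4 a2 ha2
  have hua1 : G.Adj u a1 := (hmemA a1).1 (Finset.mem_inter.1 ha1).2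
  have hua2 : G.Adj u a2 := (hmemA a2).1 (Finset.mem_inter.1 ha2).2
  exact hc hua1 hua2 ha12 (e1.trans e2.symm)

end Aux


theorem stmt14 {V : Type*} [Fintype V] [DecidableEq V] (G : SimpleGraph V) [DecidableRel G.Adj]
    (hconn : G.Connected) (hn : 9 ≤ Fintype.card V)
    (hδ : Fintype.card V - 2 ≤ 2 * G.minDegree) :
    G.prcNumber = G.chromaticIndex := by
  unfold SimpleGraph.prcNumber SimpleGraph.chromaticIndex
  congr 1
  ext k
  constructor
  · rintro ⟨c, h1, h2, _⟩
    exact ⟨c, h1, h2⟩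
  · rintro ⟨c, h1, h2⟩
    exact ⟨c, h1, h2, aux_rainbow G hconn hn hδ c h2⟩
end

section
/- Let G be a connected graph of order n ≥ 9 such that d(u) + d(v) ≥ n - 2 for every pair of non-adjacent vertices u, v of G. Then prc(G) = χ'(G). -/
open SimpleGraph

variable {V : Type*}

lemma path3 (G : SimpleGraph V) (c : Sym2 V → ℕ) (hc : G.IsProperEdgeColoring c)
    {u a b v : V} (hua : G.Adj u a) (hab : G.Adj a b) (hbv : G.Adj b v)
    (huv : ¬ G.Adj u v) (huv' : u ≠ v)
    (hne : c s(u,a) ≠ c s(b,v)) :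
    ∃ p : G.Walk u v, p.IsPath ∧ p.IsRainbow c := by
  have hub : u ≠ b := fun h => huv (h ▸ hbv)
  have hav : a ≠ v := fun h => huv (h ▸ hua)
  refine ⟨Walk.cons hua (Walk.cons hab (Walk.cons hbv Walk.nil)), ?_, ?_⟩
  · simp [Walk.cons_isPath_iff, hua.ne, hab.ne, hbv.ne, hub, hav, huv']
  · have h1 : c s(u,a) ≠ c s(a,b) := by
      rw [Sym2.eq_swap (a := u)]
      exact hc hua.symm hab hub
    have h3 : c s(a,b) ≠ c s(b,v) := by
      rw [Sym2.eq_swap (a := a)]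
      exact hc hab.symm hbv hav
    simp [Walk.IsRainbow, h1, h3, hne]


lemma aux [Fintype V] [DecidableEq V] (G : SimpleGraph V) [DecidableRel G.Adj]
    (c : Sym2 V → ℕ) (hc : G.IsProperEdgeColoring c) {u v a b : V}
    (huv : ¬ G.Adj u v)
    (hno : ∀ w, ¬ (G.Adj u w ∧ G.Adj w v))
    (hpart : ∀ w, w ≠ u → w ≠ v → G.Adj u w ∨ G.Adj v w)
    (hua : G.Adj u a) (hab : G.Adj a b) (hbv : G.Adj b v)
    (hda : 4 ≤ G.degree a) :
    ∃ p : G.Walk u v, p.IsPath ∧ p.IsRainbow c := by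
  have huv' : u ≠ v := by
    rintro rfl
    exact hno a ⟨hua, hua.symm⟩
  have hav : ¬ G.Adj a v := fun h => hno a ⟨hua, h⟩
  have hub : ¬ G.Adj u b := fun h => hno b ⟨h, hbv⟩
  by_cases h1 : c s(u,a) = c s(b,v)
  · by_cases h2 : ∃ b', b' ≠ b ∧ G.Adj a b' ∧ G.Adj b' v
    · obtain ⟨b', hb'b, hab', hb'v⟩ := h2
      refine path3 G c hc hua hab' hb'v huv huv' ?_
      rw [h1]
      intro h
      have : c s(v, b) ≠ c s(v, b') := hc hbv.symm hb'v.symm (Ne.symm hb'b)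
      rw [Sym2.eq_swap (a := v), Sym2.eq_swap (a := v)] at this
      exact this h
    · -- a has at most one neighbour adjacent to v (namely b), so many in N(u)
      push_neg at h2
      set S : Finset V := G.neighborFinset a ∩ G.neighborFinset u with hS
      have hsub : G.neighborFinset a ⊆ insert u (insert b S) := by
        intro w hw
        rw [mem_neighborFinset] at hw
        simp only [Finset.mem_insert, hS, Finset.mem_inter, mem_neighborFinset]
        by_cases hwu : w = u
        · exact Or.inl hwu
        have hwv : w ≠ v := fun h => hav (h ▸ hw)
        rcases hpart w hwu hwv with h | h
        · exact Or.inr (Or.inr ⟨hw, h⟩)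
        · right; left
          by_contra hwb
          exact h2 w hwb hw h.symm
      have hcard : 2 ≤ S.card := by
        have h3 : G.degree a ≤ (insert u (insert b S)).card :=
          (G.card_neighborFinset_eq_degree a) ▸ Finset.card_le_card hsub
        have h4 : (insert u (insert b S)).card ≤ 2 + S.card := by
          calc (insert u (insert b S)).card ≤ (insert b S).card + 1 := Finset.card_insert_le _ _
            _ ≤ S.card + 1 + 1 := by have := Finset.card_insert_le b S; omega
            _ = 2 + S.card := by ring
        omega
      have hx : ∃ x ∈ S, c s(u,x) ≠ c s(a,b) := by
        by_contra hcon
        push_neg at hcon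
        obtain ⟨x1, hx1, x2, hx2, hx12⟩ := Finset.one_lt_card.mp hcard
        have hux1 : G.Adj u x1 := by
          rw [hS] at hx1; simp only [Finset.mem_inter, mem_neighborFinset] at hx1
          exact hx1.2
        have hux2 : G.Adj u x2 := by
          rw [hS] at hx2; simp only [Finset.mem_inter, mem_neighborFinset] at hx2
          exact hx2.2
        have := hc hux1 hux2 hx12
        rw [hcon x1 hx1, hcon x2 hx2] at this
        exact this rfl
      obtain ⟨x, hxS, hxcol⟩ := hx
      rw [hS] at hxS
      simp only [Finset.mem_inter, mem_neighborFinset] at hxS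
      obtain ⟨hax, hux⟩ := hxS
      -- path u x a b v
      have hxa : x ≠ a := hax.ne'
      have hxb : x ≠ b := by
        rintro rfl
        exact hub hux
      have hxv : x ≠ v := fun h => huv (h ▸ hux)
      have hav' : a ≠ v := fun h => huv (h ▸ hua)
      have hbu' : u ≠ b := fun h => huv (h ▸ hbv)
      refine ⟨Walk.cons hux (Walk.cons hax.symm (Walk.cons hab (Walk.cons hbv Walk.nil))), ?_, ?_⟩
      · simp [Walk.cons_isPath_iff, hux.ne, hxa, hxb, hxv, hua.ne, hbu', huv', hab.ne, hav', hbv.ne]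
      · -- colours: c(ux), c(xa), c(ab), c(bv) pairwise distinct
        have e1 : c s(u,x) ≠ c s(x,a) := by
          rw [Sym2.eq_swap (a := u)]
          exact hc hux.symm hax.symm hua.ne
        have e2 : c s(u,x) ≠ c s(a,b) := hxcol
        have e3 : c s(u,x) ≠ c s(b,v) := by
          rw [← h1]
          exact hc hux hua hxa
        have e4 : c s(x,a) ≠ c s(a,b) := by
          rw [Sym2.eq_swap (a := x)]
          exact hc hax hab hxb
        have e5 : c s(x,a) ≠ c s(b,v) := by
          rw [← h1, Sym2.eq_swap (a := x), Sym2.eq_swap (a := u)]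
          exact hc hax hua.symm hux.ne'
        have e6 : c s(a,b) ≠ c s(b,v) := by
          rw [Sym2.eq_swap (a := a)]
          exact hc hab.symm hbv hav'
        simp [Walk.IsRainbow, e1, e2, e3, e4, e5, e6]
  · exact path3 G c hc hua hab hbv huv huv' h1

lemma main_lemma [Fintype V] [DecidableEq V] (G : SimpleGraph V) [DecidableRel G.Adj]
    (hconn : G.Connected) (hn : 9 ≤ Fintype.card V)
    (hdeg : ∀ u v : V, u ≠ v → ¬ G.Adj u v →
      Fintype.card V - 2 ≤ G.degree u + G.degree v)
    (c : Sym2 V → ℕ) (hc : G.IsProperEdgeColoring c) :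
    G.RainbowConnected c := by
  intro u v
  by_cases huv' : u = v
  · subst huv'
    exact ⟨Walk.nil, Walk.IsPath.nil, by simp [Walk.IsRainbow]⟩
  by_cases hadj : G.Adj u v
  · exact ⟨Walk.cons hadj Walk.nil, by simp [Walk.cons_isPath_iff, huv'],
      by simp [Walk.IsRainbow]⟩
  by_cases hcom : ∃ w, G.Adj u w ∧ G.Adj w v
  · obtain ⟨w, hw1, hw2⟩ := hcom
    refine ⟨Walk.cons hw1 (Walk.cons hw2 Walk.nil), ?_, ?_⟩
    · simp [Walk.cons_isPath_iff, hw1.ne, hw2.ne, huv']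
    · have : c s(w,u) ≠ c s(w,v) := hc hw1.symm hw2 huv'
      rw [Sym2.eq_swap (a := w) (b := u)] at this
      simp [Walk.IsRainbow, this]
  push_neg at hcom
  have hno : ∀ w, ¬ (G.Adj u w ∧ G.Adj w v) := fun w h => hcom w h.1 h.2
  -- N(u) and N(v) are disjoint
  have hdisj : Disjoint (G.neighborFinset u) (G.neighborFinset v) := by
    rw [Finset.disjoint_left]
    intro w hw1 hw2
    rw [mem_neighborFinset] at hw1 hw2
    exact hno w ⟨hw1, hw2.symm⟩
  have hsum : G.degree u + G.degree v + 2 ≤ Fintype.card V := by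
    have hsub : G.neighborFinset u ∪ G.neighborFinset v ⊆ Finset.univ \ {u, v} := by
      intro w hw
      simp only [Finset.mem_union, mem_neighborFinset] at hw
      simp only [Finset.mem_sdiff, Finset.mem_univ, Finset.mem_insert, Finset.mem_singleton,
        true_and]
      push_neg
      rcases hw with h | h
      · exact ⟨h.ne', fun hv => hadj (hv ▸ h)⟩
      · exact ⟨fun hu => hadj (hu ▸ h).symm, h.ne'⟩
    have h1 := Finset.card_le_card hsub
    rw [Finset.card_union_of_disjoint hdisj] at h1
    have h2 : (Finset.univ \ {u, v} : Finset V).card = Fintype.card V - 2 := by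
      rw [Finset.card_sdiff_of_subset (by simp)]
      simp [Finset.card_insert_of_notMem, huv']
    rw [h2] at h1
    simp only [card_neighborFinset_eq_degree] at h1
    omega
  have hpart : ∀ w, w ≠ u → w ≠ v → G.Adj u w ∨ G.Adj v w := by
    intro w hwu hwv
    by_contra hcon
    push_neg at hcon
    have hsub : G.neighborFinset u ∪ G.neighborFinset v ⊆ Finset.univ \ {u, v, w} := by
      intro x hx
      simp only [Finset.mem_union, mem_neighborFinset] at hx
      simp only [Finset.mem_sdiff, Finset.mem_univ, Finset.mem_insert, Finset.mem_singleton,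
        true_and]
      push_neg
      rcases hx with h | h
      · exact ⟨h.ne', fun hv => hadj (hv ▸ h), fun hw => hcon.1 (hw ▸ h)⟩
      · exact ⟨fun hu => hadj (hu ▸ h).symm, h.ne', fun hw => hcon.2 (hw ▸ h)⟩
    have h1 := Finset.card_le_card hsub
    rw [Finset.card_union_of_disjoint hdisj] at h1
    have hc3 : ({u, v, w} : Finset V).card = 3 := by
      rw [Finset.card_insert_of_notMem (by simp [huv', Ne.symm hwu]),
        Finset.card_insert_of_notMem (by simp [Ne.symm hwv]), Finset.card_singleton]
    have h2 : (Finset.univ \ {u, v, w} : Finset V).card = Fintype.card V - 3 := by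
      rw [Finset.card_sdiff_of_subset (by simp), hc3, Finset.card_univ]
    rw [h2] at h1
    simp only [card_neighborFinset_eq_degree] at h1
    have := hdeg u v huv' hadj
    omega
  -- boundary dart
  obtain ⟨p⟩ := hconn.preconnected u v
  obtain ⟨d, -, hd1, hd2⟩ := p.exists_boundary_dart ({x | x = u ∨ G.Adj u x} : Set V)
    (Or.inl rfl) (by
      simp only [Set.mem_setOf_eq]
      push_neg
      exact ⟨Ne.symm huv', hadj⟩)
  simp only [Set.mem_setOf_eq] at hd1 hd2
  push_neg at hd2
  set a := d.fst with ha
  set b := d.snd with hb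
  have hdadj : G.Adj a b := d.adj
  have hua : G.Adj u a := by
    rcases hd1 with h | h
    · exact absurd (h ▸ hdadj) hd2.2
    · exact h
  have hbu : b ≠ u := hd2.1
  have hbv : G.Adj b v := by
    by_cases hbv' : b = v
    · exact absurd (hbv' ▸ hdadj) (fun h => hno a ⟨hua, h⟩)
    · rcases hpart b hbu hbv' with h | h
      · exact absurd h hd2.2
      · exact h.symm
  by_cases hdv : G.degree v + 6 ≤ Fintype.card V
  · -- degree a ≥ 4
    have hav : ¬ G.Adj a v := fun h => hno a ⟨hua, h⟩
    have hav' : a ≠ v := fun h => hadj (h ▸ hua)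
    have hda : 4 ≤ G.degree a := by
      have := hdeg a v hav' hav
      omega
    exact aux G c hc hadj hno hpart hua hdadj hbv hda
  · -- degree u ≤ n - 6, so degree b ≥ 4
    have hub : ¬ G.Adj u b := fun h => hno b ⟨h, hbv⟩
    have hdb : 4 ≤ G.degree b := by
      have := hdeg u b (Ne.symm hbu) hub
      omega
    have hvu : ¬ G.Adj v u := fun h => hadj h.symm
    have hno' : ∀ w, ¬ (G.Adj v w ∧ G.Adj w u) := fun w h => hno w ⟨h.2.symm, h.1.symm⟩
    have hpart' : ∀ w, w ≠ v → w ≠ u → G.Adj v w ∨ G.Adj u w :=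
      fun w h1 h2 => (hpart w h2 h1).symm
    obtain ⟨q, hq1, hq2⟩ := aux G c hc hvu hno' hpart' hbv.symm hdadj.symm hua.symm hdb
    refine ⟨q.reverse, hq1.reverse, ?_⟩
    unfold Walk.IsRainbow at hq2 ⊢
    rw [Walk.edges_reverse, List.map_reverse]
    exact List.nodup_reverse.mpr hq2

lemma witness [Fintype V] [DecidableEq V] (G : SimpleGraph V) (hconn : G.Connected) :
    ∃ k, ∃ c : Sym2 V → ℕ, G.ColorsLE c k ∧ G.IsProperEdgeColoring c ∧ G.RainbowConnected c := by
  classical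
  refine ⟨Fintype.card (Sym2 V), fun e => (Fintype.equivFin (Sym2 V) e : ℕ), ?_, ?_, ?_⟩
  · intro e _
    exact (Fintype.equivFin (Sym2 V) e).isLt
  · intro u v w _ _ hvw h
    have := (Fintype.equivFin (Sym2 V)).injective (Fin.val_injective h)
    rw [Sym2.congr_right] at this
    exact hvw this
  · intro u v
    obtain ⟨w⟩ := hconn.preconnected u v
    refine ⟨w.toPath, w.toPath.2, ?_⟩
    have hp : (w.toPath : G.Walk u v).IsPath := w.toPath.2
    exact hp.edges_nodup.map (fun e e' h =>
      (Fintype.equivFin (Sym2 V)).injective (Fin.val_injective h))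

theorem stmt15 {V : Type*} [Fintype V] [DecidableEq V] (G : SimpleGraph V) [DecidableRel G.Adj]
    (hconn : G.Connected) (hn : 9 ≤ Fintype.card V)
    (hdeg : ∀ u v : V, u ≠ v → ¬ G.Adj u v →
      Fintype.card V - 2 ≤ G.degree u + G.degree v) :
    G.prcNumber = G.chromaticIndex := by
  obtain ⟨k0, c0, hc0, hp0, hr0⟩ := witness G hconn
  have hne_prc : {k | ∃ c : Sym2 V → ℕ, G.ColorsLE c k ∧ G.IsProperEdgeColoring c ∧
      G.RainbowConnected c}.Nonempty := ⟨k0, c0, hc0, hp0, hr0⟩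
  have hne_chr : {k | ∃ c : Sym2 V → ℕ, G.ColorsLE c k ∧ G.IsProperEdgeColoring c}.Nonempty :=
    ⟨k0, c0, hc0, hp0⟩
  apply le_antisymm
  · -- prc ≤ χ' : the optimal proper colouring is rainbow connected
    obtain ⟨c, hcle, hcp⟩ := Nat.sInf_mem hne_chr
    exact Nat.sInf_le ⟨c, hcle, hcp, main_lemma G hconn hn hdeg c hcp⟩
  · -- χ' ≤ prc
    obtain ⟨c, hcle, hcp, -⟩ := Nat.sInf_mem hne_prc
    exact Nat.sInf_le ⟨c, hcle, hcp⟩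
end

section
/- Let G be a connected graph of order n ≥ 9 with minimum degree δ(G) ≥ (n+k)/3 for some integer k ≥ 3. Then prc(G) = χ'(G). -/
open SimpleGraph

variable {V : Type*}

namespace RainbowAux

variable {G : SimpleGraph V}

lemma dist_le_one_of_adj {u v : V} (h : G.Adj u v) : G.dist u v ≤ 1 :=
  le_trans (SimpleGraph.dist_le (SimpleGraph.Walk.cons h SimpleGraph.Walk.nil)) (by simp)

lemma dist_getVert_le (hconn : G.Connected) {u v : V} (p : G.Walk u v) (i : ℕ) :
    G.dist u (p.getVert i) ≤ i := by
  induction p generalizing i with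
  | nil => simp [SimpleGraph.Walk.getVert, SimpleGraph.dist_self]
  | @cons a b w h q ih =>
    cases i with
    | zero => simp
    | succ n =>
      rw [SimpleGraph.Walk.getVert_cons_succ]
      calc G.dist a ((q).getVert n) ≤ G.dist a b + G.dist b (q.getVert n) :=
            hconn.dist_triangle
        _ ≤ 1 + n := Nat.add_le_add (dist_le_one_of_adj h) (ih n)
        _ = n + 1 := Nat.add_comm _ _

lemma getVert_dist_le {u v : V} (p : G.Walk u v) (i : ℕ) :
    G.dist (p.getVert i) v ≤ p.length - i := by
  induction p generalizing i with
  | nil => simp [SimpleGraph.Walk.getVert, SimpleGraph.dist_self]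
  | @cons a b w h q ih =>
    cases i with
    | zero =>
      simpa using SimpleGraph.dist_le (SimpleGraph.Walk.cons h q)
    | succ n =>
      rw [SimpleGraph.Walk.getVert_cons_succ]
      simpa using ih n

lemma shortest_getVert (hconn : G.Connected) {u v : V} (p : G.Walk u v)
    (hp : p.length = G.dist u v) {i : ℕ} (hi : i ≤ p.length) :
    G.dist u (p.getVert i) = i ∧ G.dist (p.getVert i) v = p.length - i := by
  have h1 := dist_getVert_le hconn p i
  have h2 := getVert_dist_le p i
  have h3 : G.dist u v ≤ G.dist u (p.getVert i) + G.dist (p.getVert i) v :=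
    hconn.dist_triangle
  omega

lemma exists_avoid [DecidableEq V] (Q : Finset V) (f g : V → ℕ)
    (hf : ∀ a ∈ Q, ∀ b ∈ Q, f a = f b → a = b)
    (hg : ∀ a ∈ Q, ∀ b ∈ Q, g a = g b → a = b)
    (L1 L2 : Finset ℕ) (h : L1.card + L2.card < Q.card) :
    ∃ b ∈ Q, f b ∉ L1 ∧ g b ∉ L2 := by
  by_contra hcon
  push_neg at hcon
  have hsub : Q ⊆ Q.filter (fun b => f b ∈ L1) ∪ Q.filter (fun b => g b ∈ L2) := by
    intro b hb
    by_cases hfb : f b ∈ L1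
    · exact Finset.mem_union_left _ (Finset.mem_filter.2 ⟨hb, hfb⟩)
    · exact Finset.mem_union_right _ (Finset.mem_filter.2 ⟨hb, hcon b hb hfb⟩)
  have c1 : (Q.filter (fun b => f b ∈ L1)).card ≤ L1.card := by
    apply Finset.card_le_card_of_injOn f
    · intro x hx; exact (Finset.mem_filter.1 hx).2
    · intro x hx y hy hxy
      exact hf x (Finset.mem_filter.1 hx).1 y (Finset.mem_filter.1 hy).1 hxy
  have c2 : (Q.filter (fun b => g b ∈ L2)).card ≤ L2.card := by
    apply Finset.card_le_card_of_injOn g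
    · intro x hx; exact (Finset.mem_filter.1 hx).2
    · intro x hx y hy hxy
      exact hg x (Finset.mem_filter.1 hx).1 y (Finset.mem_filter.1 hy).1 hxy
  have := (Finset.card_le_card hsub).trans (Finset.card_union_le _ _)
  omega

end RainbowAux

section Main

variable [Fintype V] [DecidableEq V]

theorem rainbow_of_proper (G : SimpleGraph V) [DecidableRel G.Adj]
    (hconn : G.Connected) (k : ℕ) (hk : 3 ≤ k)
    (hδ : Fintype.card V + k ≤ 3 * G.minDegree)
    (c : Sym2 V → ℕ) (hc : G.IsProperEdgeColoring c) :
    G.RainbowConnected c := by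
  classical
  have swap : ∀ x y : V, c s(x,y) = c s(y,x) := fun x y => by rw [Sym2.eq_swap]
  have hdeg : ∀ x : V, G.minDegree ≤ (G.neighborFinset x).card := fun x => by
    rw [SimpleGraph.card_neighborFinset_eq_degree]; exact G.minDegree_le_degree x
  intro u v
  by_cases huv : u = v
  · subst huv
    exact ⟨SimpleGraph.Walk.nil, by simp, by simp [SimpleGraph.Walk.IsRainbow]⟩
  obtain ⟨p, hp⟩ := hconn.exists_walk_length_eq_dist u v
  have hd0 : G.dist u v ≠ 0 := fun h => huv ((hconn.dist_eq_zero_iff).1 h)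
  rcases Nat.lt_or_ge (G.dist u v) 3 with h3 | h3
  · -- distance 1 or 2
    rcases Nat.lt_or_ge (G.dist u v) 2 with h2 | h2
    · -- distance 1
      have hl : p.length = 1 := by omega
      have a01 : G.Adj u v := by
        have := p.adj_getVert_succ (show 0 < p.length by omega)
        rw [p.getVert_zero] at this
        rw [show (0:ℕ)+1 = p.length by omega, p.getVert_length] at this
        exact this
      refine ⟨SimpleGraph.Walk.cons a01 SimpleGraph.Walk.nil, ?_, ?_⟩
      · simp [SimpleGraph.Walk.isPath_def]
        exact huv
      · simp [SimpleGraph.Walk.IsRainbow]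
    · -- distance 2
      have hl : p.length = 2 := by omega
      have h1v : p.getVert 2 = v := by rw [← hl]; exact p.getVert_length
      have a01 : G.Adj u (p.getVert 1) := by
        have := p.adj_getVert_succ (show 0 < p.length by omega)
        rwa [p.getVert_zero] at this
      have a12 : G.Adj (p.getVert 1) v := by
        have := p.adj_getVert_succ (show 1 < p.length by omega)
        rwa [h1v] at this
      refine ⟨SimpleGraph.Walk.cons a01 (SimpleGraph.Walk.cons a12 SimpleGraph.Walk.nil), ?_, ?_⟩
      · simp [SimpleGraph.Walk.isPath_def]
        exact ⟨⟨a01.ne, huv⟩, a12.ne⟩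
      · simp [SimpleGraph.Walk.IsRainbow]
        rw [swap u (p.getVert 1)]
        exact hc a01.symm a12 huv
  · -- distance at least 3
    have hnadj : ¬ G.Adj u v := fun h => by
      have := RainbowAux.dist_le_one_of_adj (G := G) h; omega
    have hABx : ∀ x, G.Adj u x → G.Adj v x → False := by
      intro x h1 h2
      have : G.dist u v ≤ 2 := le_trans
        (SimpleGraph.dist_le (SimpleGraph.Walk.cons h1 (SimpleGraph.Walk.cons h2.symm SimpleGraph.Walk.nil))) (by simp)
      omega
    have hvA : v ∉ G.neighborFinset u := fun h => hnadj ((G.mem_neighborFinset u v).1 h)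
    have huB : u ∉ G.neighborFinset v := fun h => hnadj (((G.mem_neighborFinset v u).1 h).symm)
    have huA : u ∉ G.neighborFinset u := by simp
    have hvB : v ∉ G.neighborFinset v := by simp
    have hABdisj : Disjoint (G.neighborFinset u) (G.neighborFinset v) := by
      rw [Finset.disjoint_left]
      intro x hx hx'
      exact hABx x ((G.mem_neighborFinset u x).1 hx) ((G.mem_neighborFinset v x).1 hx')
    set R := Finset.univ \ (insert u (insert v (G.neighborFinset u ∪ G.neighborFinset v)))
      with hRdef
    have hmemR : ∀ x, x ∈ R ↔ (x ≠ u ∧ x ≠ v ∧ x ∉ G.neighborFinset u ∧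
        x ∉ G.neighborFinset v) := by
      intro x
      simp only [hRdef, Finset.mem_sdiff, Finset.mem_univ, true_and, Finset.mem_insert,
        Finset.mem_union]
      tauto
    have hcard : Fintype.card V =
        2 + (G.neighborFinset u).card + (G.neighborFinset v).card + R.card := by
      have hS : (insert u (insert v (G.neighborFinset u ∪ G.neighborFinset v))).card =
          2 + (G.neighborFinset u).card + (G.neighborFinset v).card := by
        rw [Finset.card_insert_of_notMem (by
          simp only [Finset.mem_insert, Finset.mem_union]
          push_neg
          exact ⟨huv, huA, huB⟩),
          Finset.card_insert_of_notMem (by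
          simp only [Finset.mem_union]
          push_neg
          exact ⟨hvA, hvB⟩),
          Finset.card_union_of_disjoint hABdisj]
        ring
      have hR : R.card = Fintype.card V -
          (insert u (insert v (G.neighborFinset u ∪ G.neighborFinset v))).card := by
        rw [hRdef, Finset.card_sdiff_of_subset (Finset.subset_univ _), Finset.card_univ]
      have hle : (insert u (insert v (G.neighborFinset u ∪ G.neighborFinset v))).card ≤
          Fintype.card V := by
        rw [← Finset.card_univ]; exact Finset.card_le_card (Finset.subset_univ _)
      omega
    have hAcard : G.minDegree ≤ (G.neighborFinset u).card := hdeg u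
    have hBcard : G.minDegree ≤ (G.neighborFinset v).card := hdeg v
    have hRk : R.card + k + 2 ≤ G.minDegree := by omega
    rcases Nat.lt_or_ge (G.dist u v) 6 with h6 | h6
    · rcases Nat.lt_or_ge (G.dist u v) 4 with h4 | h4
      · -- distance 3
        have hl : p.length = 3 := by omega
        have h3v : p.getVert 3 = v := by rw [← hl]; exact p.getVert_length
        obtain ⟨hdu1, hdv1⟩ := RainbowAux.shortest_getVert hconn p hp
          (show 1 ≤ p.length by omega)
        obtain ⟨hdu2, hdv2⟩ := RainbowAux.shortest_getVert hconn p hp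
          (show 2 ≤ p.length by omega)
        rw [hl] at hdv1 hdv2
        set x1 := p.getVert 1 with hx1def
        set x2 := p.getVert 2 with hx2def
        have a01 : G.Adj u x1 := by
          have := p.adj_getVert_succ (show 0 < p.length by omega)
          rwa [p.getVert_zero] at this
        have a12 : G.Adj x1 x2 := p.adj_getVert_succ (show 1 < p.length by omega)
        have a2v : G.Adj x2 v := by
          have := p.adj_getVert_succ (show 2 < p.length by omega)
          rwa [h3v] at this
        have hx1A : x1 ∈ G.neighborFinset u := (G.mem_neighborFinset u x1).2 a01
        have hx2B : x2 ∈ G.neighborFinset v := (G.mem_neighborFinset v x2).2 a2v.symm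
        have hx1v : x1 ≠ v := fun h => by rw [h] at hdv1; simp [SimpleGraph.dist_self] at hdv1
        have hux2 : u ≠ x2 := fun h => by rw [← h] at hdu2; simp [SimpleGraph.dist_self] at hdu2
        have hx1x2 : x1 ≠ x2 := fun h => by
          exact Finset.disjoint_left.1 hABdisj (h ▸ hx1A) hx2B
        have hnadj1v : ¬ G.Adj x1 v := fun h => by
          have := RainbowAux.dist_le_one_of_adj (G := G) h; omega
        by_cases hγ : c s(u,x1) = c s(x2,v)
        swap
        · -- direct three-path
          refine ⟨SimpleGraph.Walk.cons a01 (SimpleGraph.Walk.cons a12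
            (SimpleGraph.Walk.cons a2v SimpleGraph.Walk.nil)), ?_, ?_⟩
          · simp [SimpleGraph.Walk.isPath_def]
            exact ⟨⟨a01.ne, hux2, huv⟩, ⟨a12.ne, hx1v⟩, a2v.ne⟩
          · simp [SimpleGraph.Walk.IsRainbow]
            refine ⟨⟨?_, hγ⟩, ?_⟩
            · rw [swap u x1]; exact hc a01.symm a12 hux2
            · rw [swap x1 x2]; exact hc a12.symm a2v hx1v
        · by_cases hbex : ∃ b ∈ (G.neighborFinset x1) ∩ (G.neighborFinset v),
              c s(b,v) ≠ c s(u,x1)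
          · obtain ⟨b, hbmem, hbcol⟩ := hbex
            rw [Finset.mem_inter] at hbmem
            have hbx1 : G.Adj x1 b := (G.mem_neighborFinset x1 b).1 hbmem.1
            have hbv : G.Adj b v := ((G.mem_neighborFinset v b).1 hbmem.2).symm
            have hbu : b ≠ u := fun h => huB (h ▸ hbmem.2)
            have hbB : b ∈ G.neighborFinset v := hbmem.2
            have hbne_v : b ≠ v := hbv.ne
            have hbx1ne : x1 ≠ b := hbx1.ne
            refine ⟨SimpleGraph.Walk.cons a01 (SimpleGraph.Walk.cons hbx1
              (SimpleGraph.Walk.cons hbv SimpleGraph.Walk.nil)), ?_, ?_⟩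
            · simp [SimpleGraph.Walk.isPath_def]
              exact ⟨⟨a01.ne, hbu.symm, huv⟩, ⟨hbx1ne, hx1v⟩, hbne_v⟩
            · simp [SimpleGraph.Walk.IsRainbow]
              refine ⟨⟨?_, fun h => hbcol h.symm⟩, ?_⟩
              · rw [swap u x1]; exact hc a01.symm hbx1 hbu.symm
              · rw [swap x1 b]; exact hc hbx1.symm hbv hx1v
          · by_cases haex : ∃ a ∈ (G.neighborFinset x1) ∩ (G.neighborFinset u),
                c s(u,a) ≠ c s(x1,x2)
            · obtain ⟨a, hamem, hacol⟩ := haex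
              rw [Finset.mem_inter] at hamem
              have hax1 : G.Adj x1 a := (G.mem_neighborFinset x1 a).1 hamem.1
              have hau : G.Adj u a := (G.mem_neighborFinset u a).1 hamem.2
              have hav : a ≠ v := fun h => hvA (h ▸ hamem.2)
              have hax2 : a ≠ x2 := fun h =>
                Finset.disjoint_left.1 hABdisj (h ▸ hamem.2) hx2B
              have hax1ne : a ≠ x1 := fun h => (h ▸ hax1).ne rfl
              refine ⟨SimpleGraph.Walk.cons hau (SimpleGraph.Walk.cons hax1.symm
                (SimpleGraph.Walk.cons a12 (SimpleGraph.Walk.cons a2v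
                SimpleGraph.Walk.nil))), ?_, ?_⟩
              · simp [SimpleGraph.Walk.isPath_def]
                exact ⟨⟨hau.ne, a01.ne, hux2, huv⟩, ⟨hax1ne, hax2, hav⟩,
                  ⟨a12.ne, hx1v⟩, a2v.ne⟩
              · simp [SimpleGraph.Walk.IsRainbow]
                -- edges: s(u,a), s(a,x1), s(x1,x2), s(x2,v)
                have e1 : c s(u,a) ≠ c s(a,x1) := by
                  rw [swap u a]; exact hc hau.symm hax1.symm a01.ne
                have e2 : c s(u,a) ≠ c s(x1,x2) := hacol
                have e3 : c s(u,a) ≠ c s(x2,v) := by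
                  rw [← hγ]; exact hc hau a01 hax1ne
                have e4 : c s(a,x1) ≠ c s(x1,x2) := by
                  rw [swap a x1]; exact hc hax1 a12 hax2
                have e5 : c s(a,x1) ≠ c s(x2,v) := by
                  rw [← hγ, swap a x1, swap u x1]
                  exact hc hax1 a01.symm (fun h => huA (h ▸ hamem.2))
                have e6 : c s(x1,x2) ≠ c s(x2,v) := by
                  rw [swap x1 x2]; exact hc a12.symm a2v hx1v
                exact ⟨⟨e1, e2, e3⟩, ⟨e4, e5⟩, e6⟩
            · -- contradiction via degree of x1
              exfalso
              push_neg at hbex haex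
              have hQ : ((G.neighborFinset x1) ∩ (G.neighborFinset v)).card ≤ 1 := by
                rw [Finset.card_le_one]
                intro b hb b' hb'
                rw [Finset.mem_inter] at hb hb'
                by_contra hne
                have h1 : G.Adj v b := (G.mem_neighborFinset v b).1 hb.2
                have h2 : G.Adj v b' := (G.mem_neighborFinset v b').1 hb'.2
                have := hc h1 h2 hne
                have hb1 := hbex b (Finset.mem_inter.2 hb)
                have hb2 := hbex b' (Finset.mem_inter.2 hb')
                rw [swap b v] at hb1
                rw [swap b' v] at hb2
                exact this (hb1.trans hb2.symm)
              have hP : ((G.neighborFinset x1) ∩ (G.neighborFinset u)).card ≤ 1 := by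
                rw [Finset.card_le_one]
                intro a ha a' ha'
                rw [Finset.mem_inter] at ha ha'
                by_contra hne
                have h1 : G.Adj u a := (G.mem_neighborFinset u a).1 ha.2
                have h2 : G.Adj u a' := (G.mem_neighborFinset u a').1 ha'.2
                have := hc h1 h2 hne
                have ha1 := haex a (Finset.mem_inter.2 ha)
                have ha2 := haex a' (Finset.mem_inter.2 ha')
                exact this (ha1.trans ha2.symm)
              have hsub : G.neighborFinset x1 ⊆ insert u
                  (((G.neighborFinset x1) ∩ (G.neighborFinset u)) ∪
                   ((G.neighborFinset x1) ∩ (G.neighborFinset v)) ∪ R) := by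
                intro y hy
                have hyadj : G.Adj x1 y := (G.mem_neighborFinset x1 y).1 hy
                rw [Finset.mem_insert]
                by_cases hyu : y = u
                · exact Or.inl hyu
                right
                rw [Finset.mem_union, Finset.mem_union]
                by_cases hyA : y ∈ G.neighborFinset u
                · exact Or.inl (Or.inl (Finset.mem_inter.2 ⟨hy, hyA⟩))
                by_cases hyB : y ∈ G.neighborFinset v
                · exact Or.inl (Or.inr (Finset.mem_inter.2 ⟨hy, hyB⟩))
                have hyv : y ≠ v := fun h => hnadj1v (h ▸ hyadj)
                exact Or.inr ((hmemR y).2 ⟨hyu, hyv, hyA, hyB⟩)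
              have hdle := Finset.card_le_card hsub
              have h1 := Finset.card_insert_le u
                (((G.neighborFinset x1) ∩ (G.neighborFinset u)) ∪
                 ((G.neighborFinset x1) ∩ (G.neighborFinset v)) ∪ R)
              have h2 := Finset.card_union_le
                (((G.neighborFinset x1) ∩ (G.neighborFinset u)) ∪
                 ((G.neighborFinset x1) ∩ (G.neighborFinset v))) R
              have h3 := Finset.card_union_le
                ((G.neighborFinset x1) ∩ (G.neighborFinset u))
                ((G.neighborFinset x1) ∩ (G.neighborFinset v))
              have hx1deg := hdeg x1
              omega
      · -- distance 4 or 5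
        rcases Nat.lt_or_ge (G.dist u v) 5 with h5 | h5
        · -- distance 4
          have hl : p.length = 4 := by omega
          have h4v : p.getVert 4 = v := by rw [← hl]; exact p.getVert_length
          obtain ⟨hdu1, hdv1⟩ := RainbowAux.shortest_getVert hconn p hp
            (show 1 ≤ p.length by omega)
          obtain ⟨hdu2, hdv2⟩ := RainbowAux.shortest_getVert hconn p hp
            (show 2 ≤ p.length by omega)
          obtain ⟨hdu3, hdv3⟩ := RainbowAux.shortest_getVert hconn p hp
            (show 3 ≤ p.length by omega)
          rw [hl] at hdv1 hdv2 hdv3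
          set x1 := p.getVert 1 with hx1def
          set x2 := p.getVert 2 with hx2def
          set x3 := p.getVert 3 with hx3def
          have a01 : G.Adj u x1 := by
            have := p.adj_getVert_succ (show 0 < p.length by omega)
            rwa [p.getVert_zero] at this
          have a12 : G.Adj x1 x2 := p.adj_getVert_succ (show 1 < p.length by omega)
          have a23 : G.Adj x2 x3 := p.adj_getVert_succ (show 2 < p.length by omega)
          have a3v : G.Adj x3 v := by
            have := p.adj_getVert_succ (show 3 < p.length by omega)
            rwa [h4v] at this
          have hx1A : x1 ∈ G.neighborFinset u := (G.mem_neighborFinset u x1).2 a01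
          have hx3B : x3 ∈ G.neighborFinset v := (G.mem_neighborFinset v x3).2 a3v.symm
          have hx2u : x2 ≠ u := fun h => by rw [h] at hdu2; simp [SimpleGraph.dist_self] at hdu2
          have hx2v : x2 ≠ v := fun h => by rw [h] at hdv2; simp [SimpleGraph.dist_self] at hdv2
          have hx2A : x2 ∉ G.neighborFinset u := fun h => by
            have := RainbowAux.dist_le_one_of_adj ((G.mem_neighborFinset u x2).1 h)
            omega
          have hx2B : x2 ∉ G.neighborFinset v := fun h => by
            have := RainbowAux.dist_le_one_of_adj ((G.mem_neighborFinset v x2).1 h)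
            rw [SimpleGraph.dist_comm] at this
            omega
          have hx2R : x2 ∈ R := (hmemR x2).2 ⟨hx2u, hx2v, hx2A, hx2B⟩
          -- the two fans of the hub x2
          set P := (G.neighborFinset x2) ∩ (G.neighborFinset u) with hPdef
          set Q := (G.neighborFinset x2) ∩ (G.neighborFinset v) with hQdef
          have hx1P : x1 ∈ P := Finset.mem_inter.2
            ⟨(G.mem_neighborFinset x2 x1).2 a12.symm, hx1A⟩
          have hx3Q : x3 ∈ Q := Finset.mem_inter.2
            ⟨(G.mem_neighborFinset x2 x3).2 a23, hx3B⟩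
          have hPA : ∀ a ∈ P, G.Adj u a ∧ G.Adj x2 a := by
            intro a ha
            rw [hPdef, Finset.mem_inter] at ha
            exact ⟨(G.mem_neighborFinset u a).1 ha.2, (G.mem_neighborFinset x2 a).1 ha.1⟩
          have hQB : ∀ b ∈ Q, G.Adj v b ∧ G.Adj x2 b := by
            intro b hb
            rw [hQdef, Finset.mem_inter] at hb
            exact ⟨(G.mem_neighborFinset v b).1 hb.2, (G.mem_neighborFinset x2 b).1 hb.1⟩
          have hPQcard : k + 3 ≤ P.card + Q.card := by
            have hsub : G.neighborFinset x2 ⊆ P ∪ Q ∪ (R.erase x2) := by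
              intro y hy
              have hyadj : G.Adj x2 y := (G.mem_neighborFinset x2 y).1 hy
              rw [Finset.mem_union, Finset.mem_union]
              by_cases hyA : y ∈ G.neighborFinset u
              · exact Or.inl (Or.inl (Finset.mem_inter.2 ⟨hy, hyA⟩))
              by_cases hyB : y ∈ G.neighborFinset v
              · exact Or.inl (Or.inr (Finset.mem_inter.2 ⟨hy, hyB⟩))
              have hyu : y ≠ u := fun h => by
                have := RainbowAux.dist_le_one_of_adj (h ▸ hyadj).symm
                omega
              have hyv : y ≠ v := fun h => by
                have := RainbowAux.dist_le_one_of_adj (h ▸ hyadj)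
                omega
              exact Or.inr (Finset.mem_erase.2 ⟨hyadj.ne', (hmemR y).2 ⟨hyu, hyv, hyA, hyB⟩⟩)
            have hcle := (hdeg x2).trans (Finset.card_le_card hsub)
            have h1 := Finset.card_union_le (P ∪ Q) (R.erase x2)
            have h2 := Finset.card_union_le P Q
            have h3 : (R.erase x2).card = R.card - 1 := Finset.card_erase_of_mem hx2R
            have h4 : 1 ≤ R.card := Finset.card_pos.2 ⟨x2, hx2R⟩
            omega
          -- colour functions and their properties
          have pinj : ∀ a ∈ P, ∀ a' ∈ P, c s(u,a) = c s(u,a') → a = a' := by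
            intro a ha a' ha' h
            by_contra hne
            exact hc (hPA a ha).1 (hPA a' ha').1 hne h
          have xinj : ∀ a ∈ P, ∀ a' ∈ P, c s(a,x2) = c s(a',x2) → a = a' := by
            intro a ha a' ha' h
            by_contra hne
            rw [swap a x2, swap a' x2] at h
            exact hc (hPA a ha).2 (hPA a' ha').2 hne h
          have yinj : ∀ b ∈ Q, ∀ b' ∈ Q, c s(x2,b) = c s(x2,b') → b = b' := by
            intro b hb b' hb' h
            by_contra hne
            exact hc (hQB b hb).2 (hQB b' hb').2 hne h
          have qinj : ∀ b ∈ Q, ∀ b' ∈ Q, c s(b,v) = c s(b',v) → b = b' := by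
            intro b hb b' hb' h
            by_contra hne
            rw [swap b v, swap b' v] at h
            exact hc (hQB b hb).1 (hQB b' hb').1 hne h
          have hcross : ∀ a ∈ P, ∀ b ∈ Q, c s(a,x2) ≠ c s(x2,b) := by
            intro a ha b hb
            have hab : a ≠ b := by
              intro h
              rw [hPdef, Finset.mem_inter] at ha
              rw [hQdef, Finset.mem_inter] at hb
              exact Finset.disjoint_left.1 hABdisj ha.2 (h ▸ hb.2)
            rw [swap a x2]
            exact hc (hPA a ha).2 (hQB b hb).2 hab
          have hpx : ∀ a ∈ P, c s(u,a) ≠ c s(a,x2) := by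
            intro a ha
            rw [swap u a]
            exact hc (hPA a ha).1.symm (hPA a ha).2.symm hx2u.symm
          have hyq : ∀ b ∈ Q, c s(x2,b) ≠ c s(b,v) := by
            intro b hb
            rw [swap x2 b]
            exact hc (hQB b hb).2.symm (hQB b hb).1.symm hx2v
          -- the key existence of a good pair (a, b)
          have key : ∃ a ∈ P, ∃ b ∈ Q, c s(u,a) ≠ c s(x2,b) ∧ c s(u,a) ≠ c s(b,v) ∧
              c s(a,x2) ≠ c s(b,v) := by
            rcases Nat.lt_or_ge P.card 4 with hPlt | hPge
            · rcases Nat.lt_or_ge Q.card 4 with hQlt | hQge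
              · -- the tight case |P| = |Q| = 3
                have hP3 : P.card = 3 := by omega
                have hQ3 : Q.card = 3 := by omega
                by_contra hbad
                push_neg at hbad
                -- step 1 : ∀ a ∈ P, ∃ b ∈ Q, c s(u,a) = c s(b,v)
                have step1 : ∀ a ∈ P, ∃ b ∈ Q, c s(u,a) = c s(b,v) := by
                  intro a ha
                  by_contra hno
                  push_neg at hno
                  have hsub : Q ⊆ Q.filter (fun b => c s(x2,b) = c s(u,a)) ∪
                      Q.filter (fun b => c s(b,v) = c s(a,x2)) := by
                    intro b hb
                    by_cases h : c s(u,a) = c s(x2,b)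
                    · exact Finset.mem_union_left _ (Finset.mem_filter.2 ⟨hb, h.symm⟩)
                    · have h3 := hbad a ha b hb h (hno b hb)
                      exact Finset.mem_union_right _ (Finset.mem_filter.2 ⟨hb, h3.symm⟩)
                  have c1 : (Q.filter (fun b => c s(x2,b) = c s(u,a))).card ≤ 1 := by
                    rw [Finset.card_le_one]
                    intro b hb b' hb'
                    rw [Finset.mem_filter] at hb hb'
                    exact yinj b hb.1 b' hb'.1 (hb.2.trans hb'.2.symm)
                  have c2 : (Q.filter (fun b => c s(b,v) = c s(a,x2))).card ≤ 1 := by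
                    rw [Finset.card_le_one]
                    intro b hb b' hb'
                    rw [Finset.mem_filter] at hb hb'
                    exact qinj b hb.1 b' hb'.1 (hb.2.trans hb'.2.symm)
                  have := (Finset.card_le_card hsub).trans (Finset.card_union_le _ _)
                  omega
                -- step 2 : ∀ a ∈ P, ∃ b ∈ Q, c s(a,x2) = c s(b,v)
                have step2 : ∀ a ∈ P, ∃ b ∈ Q, c s(a,x2) = c s(b,v) := by
                  intro a ha
                  by_contra hno
                  push_neg at hno
                  have hsub : Q ⊆ Q.filter (fun b => c s(x2,b) = c s(u,a)) ∪
                      Q.filter (fun b => c s(b,v) = c s(u,a)) := by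
                    intro b hb
                    by_cases h : c s(u,a) = c s(x2,b)
                    · exact Finset.mem_union_left _ (Finset.mem_filter.2 ⟨hb, h.symm⟩)
                    by_cases h2 : c s(u,a) = c s(b,v)
                    · exact Finset.mem_union_right _ (Finset.mem_filter.2 ⟨hb, h2.symm⟩)
                    · exact absurd (hbad a ha b hb h h2) (hno b hb)
                  have c1 : (Q.filter (fun b => c s(x2,b) = c s(u,a))).card ≤ 1 := by
                    rw [Finset.card_le_one]
                    intro b hb b' hb'
                    rw [Finset.mem_filter] at hb hb'
                    exact yinj b hb.1 b' hb'.1 (hb.2.trans hb'.2.symm)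
                  have c2 : (Q.filter (fun b => c s(b,v) = c s(u,a))).card ≤ 1 := by
                    rw [Finset.card_le_one]
                    intro b hb b' hb'
                    rw [Finset.mem_filter] at hb hb'
                    exact qinj b hb.1 b' hb'.1 (hb.2.trans hb'.2.symm)
                  have := (Finset.card_le_card hsub).trans (Finset.card_union_le _ _)
                  omega
                -- step 3 : ∀ b ∈ Q, ∃ a ∈ P, c s(x2,b) = c s(u,a)
                have step3 : ∀ b ∈ Q, ∃ a ∈ P, c s(x2,b) = c s(u,a) := by
                  intro b hb
                  by_contra hno
                  push_neg at hno
                  have hsub : P ⊆ P.filter (fun a => c s(u,a) = c s(b,v)) ∪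
                      P.filter (fun a => c s(a,x2) = c s(b,v)) := by
                    intro a ha
                    by_cases h : c s(u,a) = c s(x2,b)
                    · exact absurd h.symm (hno a ha)
                    by_cases h2 : c s(u,a) = c s(b,v)
                    · exact Finset.mem_union_left _ (Finset.mem_filter.2 ⟨ha, h2⟩)
                    · exact Finset.mem_union_right _
                        (Finset.mem_filter.2 ⟨ha, hbad a ha b hb h h2⟩)
                  have c1 : (P.filter (fun a => c s(u,a) = c s(b,v))).card ≤ 1 := by
                    rw [Finset.card_le_one]
                    intro a ha a' ha'
                    rw [Finset.mem_filter] at ha ha'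
                    exact pinj a ha.1 a' ha'.1 (ha.2.trans ha'.2.symm)
                  have c2 : (P.filter (fun a => c s(a,x2) = c s(b,v))).card ≤ 1 := by
                    rw [Finset.card_le_one]
                    intro a ha a' ha'
                    rw [Finset.mem_filter] at ha ha'
                    exact xinj a ha.1 a' ha'.1 (ha.2.trans ha'.2.symm)
                  have := (Finset.card_le_card hsub).trans (Finset.card_union_le _ _)
                  omega
                -- image sets
                have hqI : (Q.image (fun b => c s(b,v))).card = 3 := by
                  rw [Finset.card_image_of_injOn, hQ3]
                  intro b hb b' hb' h
                  exact qinj b hb b' hb' h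
                have hpsub : P.image (fun a => c s(u,a)) ⊆ Q.image (fun b => c s(b,v)) := by
                  intro t ht
                  rw [Finset.mem_image] at ht ⊢
                  obtain ⟨a, ha, rfl⟩ := ht
                  obtain ⟨b, hb, hba⟩ := step1 a ha
                  exact ⟨b, hb, hba.symm⟩
                have hpI : (P.image (fun a => c s(u,a))).card = 3 := by
                  rw [Finset.card_image_of_injOn, hP3]
                  intro a ha a' ha' h
                  exact pinj a ha a' ha' h
                have hpeq : P.image (fun a => c s(u,a)) = Q.image (fun b => c s(b,v)) :=
                  Finset.eq_of_subset_of_card_le hpsub (by omega)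
                have hxsub : P.image (fun a => c s(a,x2)) ⊆ Q.image (fun b => c s(b,v)) := by
                  intro t ht
                  rw [Finset.mem_image] at ht ⊢
                  obtain ⟨a, ha, rfl⟩ := ht
                  obtain ⟨b, hb, hba⟩ := step2 a ha
                  exact ⟨b, hb, hba.symm⟩
                have hysub : Q.image (fun b => c s(x2,b)) ⊆ Q.image (fun b => c s(b,v)) := by
                  rw [← hpeq]
                  intro t ht
                  rw [Finset.mem_image] at ht ⊢
                  obtain ⟨b, hb, rfl⟩ := ht
                  obtain ⟨a, ha, hab⟩ := step3 b hb
                  exact ⟨a, ha, hab.symm⟩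
                have hxI : (P.image (fun a => c s(a,x2))).card = 3 := by
                  rw [Finset.card_image_of_injOn, hP3]
                  intro a ha a' ha' h
                  exact xinj a ha a' ha' h
                have hyI : (Q.image (fun b => c s(x2,b))).card = 3 := by
                  rw [Finset.card_image_of_injOn, hQ3]
                  intro b hb b' hb' h
                  exact yinj b hb b' hb' h
                have hdisjxy : Disjoint (P.image (fun a => c s(a,x2)))
                    (Q.image (fun b => c s(x2,b))) := by
                  rw [Finset.disjoint_left]
                  intro t ht ht'
                  rw [Finset.mem_image] at ht ht'
                  obtain ⟨a, ha, rfl⟩ := ht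
                  obtain ⟨b, hb, hba⟩ := ht'
                  exact hcross a ha b hb hba.symm
                have hbig : (P.image (fun a => c s(a,x2)) ∪
                    Q.image (fun b => c s(x2,b))).card = 6 := by
                  rw [Finset.card_union_of_disjoint hdisjxy, hxI, hyI]
                have hsmall : P.image (fun a => c s(a,x2)) ∪ Q.image (fun b => c s(x2,b)) ⊆
                    Q.image (fun b => c s(b,v)) := Finset.union_subset hxsub hysub
                have := Finset.card_le_card hsmall
                omega
              · -- |Q| ≥ 4 : fix a := x1, choose b
                obtain ⟨b, hb, h1, h2⟩ := RainbowAux.exists_avoid Q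
                  (fun b => c s(x2,b)) (fun b => c s(b,v)) yinj qinj
                  {c s(u,x1)} {c s(u,x1), c s(x1,x2)} (by
                    have : ({c s(u,x1), c s(x1,x2)} : Finset ℕ).card ≤ 2 :=
                      Finset.card_insert_le _ _ |>.trans (by simp)
                    have h1 : ({c s(u,x1)} : Finset ℕ).card = 1 := Finset.card_singleton _
                    omega)
                refine ⟨x1, hx1P, b, hb, ?_, ?_, ?_⟩
                · simp only [Finset.mem_singleton] at h1
                  exact fun h => h1 h.symm
                · simp only [Finset.mem_insert, Finset.mem_singleton] at h2
                  exact fun h => h2 (Or.inl h.symm)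
                · simp only [Finset.mem_insert, Finset.mem_singleton] at h2
                  exact fun h => h2 (Or.inr h.symm)
            · -- |P| ≥ 4 : fix b := x3, choose a
              obtain ⟨a, ha, h1, h2⟩ := RainbowAux.exists_avoid P
                (fun a => c s(u,a)) (fun a => c s(a,x2)) pinj xinj
                {c s(x2,x3), c s(x3,v)} {c s(x3,v)} (by
                  have : ({c s(x2,x3), c s(x3,v)} : Finset ℕ).card ≤ 2 :=
                    Finset.card_insert_le _ _ |>.trans (by simp)
                  have h1 : ({c s(x3,v)} : Finset ℕ).card = 1 := Finset.card_singleton _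
                  omega)
              refine ⟨a, ha, x3, hx3Q, ?_, ?_, ?_⟩
              · simp only [Finset.mem_insert, Finset.mem_singleton] at h1
                exact fun h => h1 (Or.inl h)
              · simp only [Finset.mem_insert, Finset.mem_singleton] at h1
                exact fun h => h1 (Or.inr h)
              · simp only [Finset.mem_singleton] at h2
                exact fun h => h2 h
          -- build the walk u, a, x2, b, v
          obtain ⟨a, ha, b, hb, k1, k2, k3⟩ := key
          have hau : G.Adj u a := (hPA a ha).1
          have hax2 : G.Adj a x2 := (hPA a ha).2.symm
          have hx2b : G.Adj x2 b := (hQB b hb).2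
          have hbv : G.Adj b v := (hQB b hb).1.symm
          have haA : a ∈ G.neighborFinset u := (Finset.mem_inter.1 ha).2
          have hbB : b ∈ G.neighborFinset v := (Finset.mem_inter.1 hb).2
          have hab : a ≠ b := fun h => Finset.disjoint_left.1 hABdisj haA (h ▸ hbB)
          have hav : a ≠ v := fun h => hvA (h ▸ haA)
          have hbu : b ≠ u := fun h => huB (h ▸ hbB)
          refine ⟨SimpleGraph.Walk.cons hau (SimpleGraph.Walk.cons hax2
            (SimpleGraph.Walk.cons hx2b (SimpleGraph.Walk.cons hbv
            SimpleGraph.Walk.nil))), ?_, ?_⟩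
          · simp [SimpleGraph.Walk.isPath_def]
            exact ⟨⟨hau.ne, hx2u.symm, hbu.symm, huv⟩, ⟨hax2.ne, hab, hav⟩,
              ⟨hx2b.ne, hx2v⟩, hbv.ne⟩
          · simp [SimpleGraph.Walk.IsRainbow]
            exact ⟨⟨hpx a ha, k1, k2⟩, ⟨hcross a ha b hb, k3⟩, hyq b hb⟩
        · -- distance 5
          have hl : p.length = 5 := by omega
          have h5v : p.getVert 5 = v := by rw [← hl]; exact p.getVert_length
          obtain ⟨hdu2, hdv2⟩ := RainbowAux.shortest_getVert hconn p hp
            (show 2 ≤ p.length by omega)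
          obtain ⟨hdu3, hdv3⟩ := RainbowAux.shortest_getVert hconn p hp
            (show 3 ≤ p.length by omega)
          rw [hl] at hdv2 hdv3
          set x1 := p.getVert 1 with hx1def
          set x2 := p.getVert 2 with hx2def
          set x3 := p.getVert 3 with hx3def
          set x4 := p.getVert 4 with hx4def
          have a01 : G.Adj u x1 := by
            have := p.adj_getVert_succ (show 0 < p.length by omega)
            rwa [p.getVert_zero] at this
          have a12 : G.Adj x1 x2 := p.adj_getVert_succ (show 1 < p.length by omega)
          have a23 : G.Adj x2 x3 := p.adj_getVert_succ (show 2 < p.length by omega)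
          have a34 : G.Adj x3 x4 := p.adj_getVert_succ (show 3 < p.length by omega)
          have a4v : G.Adj x4 v := by
            have := p.adj_getVert_succ (show 4 < p.length by omega)
            rwa [h5v] at this
          have hx2u : x2 ≠ u := fun h => by rw [h] at hdu2; simp [SimpleGraph.dist_self] at hdu2
          have hx2v : x2 ≠ v := fun h => by rw [h] at hdv2; simp [SimpleGraph.dist_self] at hdv2
          have hx3u : x3 ≠ u := fun h => by rw [h] at hdu3; simp [SimpleGraph.dist_self] at hdu3
          have hx3v : x3 ≠ v := fun h => by rw [h] at hdv3; simp [SimpleGraph.dist_self] at hdv3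
          have hx2A : x2 ∉ G.neighborFinset u := fun h => by
            have := RainbowAux.dist_le_one_of_adj ((G.mem_neighborFinset u x2).1 h)
            omega
          have hx2B : x2 ∉ G.neighborFinset v := fun h => by
            have := RainbowAux.dist_le_one_of_adj ((G.mem_neighborFinset v x2).1 h)
            rw [SimpleGraph.dist_comm] at this
            omega
          have hx3A : x3 ∉ G.neighborFinset u := fun h => by
            have := RainbowAux.dist_le_one_of_adj ((G.mem_neighborFinset u x3).1 h)
            omega
          have hx3B : x3 ∉ G.neighborFinset v := fun h => by
            have := RainbowAux.dist_le_one_of_adj ((G.mem_neighborFinset v x3).1 h)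
            rw [SimpleGraph.dist_comm] at this
            omega
          have hx2R : x2 ∈ R := (hmemR x2).2 ⟨hx2u, hx2v, hx2A, hx2B⟩
          have hx3R : x3 ∈ R := (hmemR x3).2 ⟨hx3u, hx3v, hx3A, hx3B⟩
          set P := (G.neighborFinset x2) ∩ (G.neighborFinset u) with hPdef
          set Q := (G.neighborFinset x3) ∩ (G.neighborFinset v) with hQdef
          have hPA : ∀ a ∈ P, G.Adj u a ∧ G.Adj x2 a := by
            intro a ha
            rw [hPdef, Finset.mem_inter] at ha
            exact ⟨(G.mem_neighborFinset u a).1 ha.2, (G.mem_neighborFinset x2 a).1 ha.1⟩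
          have hQB : ∀ b ∈ Q, G.Adj v b ∧ G.Adj x3 b := by
            intro b hb
            rw [hQdef, Finset.mem_inter] at hb
            exact ⟨(G.mem_neighborFinset v b).1 hb.2, (G.mem_neighborFinset x3 b).1 hb.1⟩
          have hPcard : k + 3 ≤ P.card := by
            have hsub : G.neighborFinset x2 ⊆ P ∪ (R.erase x2) := by
              intro y hy
              have hyadj : G.Adj x2 y := (G.mem_neighborFinset x2 y).1 hy
              rw [Finset.mem_union]
              by_cases hyA : y ∈ G.neighborFinset u
              · exact Or.inl (Finset.mem_inter.2 ⟨hy, hyA⟩)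
              have hyu : y ≠ u := fun h => by
                have := RainbowAux.dist_le_one_of_adj (h ▸ hyadj).symm
                omega
              have hyv : y ≠ v := fun h => by
                have := RainbowAux.dist_le_one_of_adj (h ▸ hyadj)
                omega
              have hyB : y ∉ G.neighborFinset v := by
                intro hyB
                have h1 := RainbowAux.dist_le_one_of_adj hyadj
                have h2 := RainbowAux.dist_le_one_of_adj ((G.mem_neighborFinset v y).1 hyB)
                have h3 : G.dist x2 v ≤ G.dist x2 y + G.dist y v := hconn.dist_triangle
                rw [SimpleGraph.dist_comm (u := v)] at h2
                omega
              exact Or.inr (Finset.mem_erase.2 ⟨hyadj.ne', (hmemR y).2 ⟨hyu, hyv, hyA, hyB⟩⟩)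
            have hcle := (hdeg x2).trans (Finset.card_le_card hsub)
            have h1 := Finset.card_union_le P (R.erase x2)
            have h3 : (R.erase x2).card = R.card - 1 := Finset.card_erase_of_mem hx2R
            have h4 : 1 ≤ R.card := Finset.card_pos.2 ⟨x2, hx2R⟩
            omega
          have hQcard : k + 3 ≤ Q.card := by
            have hsub : G.neighborFinset x3 ⊆ Q ∪ (R.erase x3) := by
              intro y hy
              have hyadj : G.Adj x3 y := (G.mem_neighborFinset x3 y).1 hy
              rw [Finset.mem_union]
              by_cases hyB : y ∈ G.neighborFinset v
              · exact Or.inl (Finset.mem_inter.2 ⟨hy, hyB⟩)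
              have hyu : y ≠ u := fun h => by
                have := RainbowAux.dist_le_one_of_adj (h ▸ hyadj).symm
                omega
              have hyv : y ≠ v := fun h => by
                have := RainbowAux.dist_le_one_of_adj (h ▸ hyadj)
                omega
              have hyA : y ∉ G.neighborFinset u := by
                intro hyA
                have h1 := RainbowAux.dist_le_one_of_adj hyadj.symm
                have h2 := RainbowAux.dist_le_one_of_adj ((G.mem_neighborFinset u y).1 hyA)
                have h3 : G.dist u x3 ≤ G.dist u y + G.dist y x3 := hconn.dist_triangle
                omega
              exact Or.inr (Finset.mem_erase.2 ⟨hyadj.ne', (hmemR y).2 ⟨hyu, hyv, hyA, hyB⟩⟩)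
            have hcle := (hdeg x3).trans (Finset.card_le_card hsub)
            have h1 := Finset.card_union_le Q (R.erase x3)
            have h3 : (R.erase x3).card = R.card - 1 := Finset.card_erase_of_mem hx3R
            have h4 : 1 ≤ R.card := Finset.card_pos.2 ⟨x3, hx3R⟩
            omega
          have pinj : ∀ a ∈ P, ∀ a' ∈ P, c s(u,a) = c s(u,a') → a = a' := by
            intro a ha a' ha' h
            by_contra hne
            exact hc (hPA a ha).1 (hPA a' ha').1 hne h
          have γinj : ∀ b ∈ Q, ∀ b' ∈ Q, c s(x3,b) = c s(x3,b') → b = b' := by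
            intro b hb b' hb' h
            by_contra hne
            exact hc (hQB b hb).2 (hQB b' hb').2 hne h
          have qinj : ∀ b ∈ Q, ∀ b' ∈ Q, c s(b,v) = c s(b',v) → b = b' := by
            intro b hb b' hb' h
            by_contra hne
            rw [swap b v, swap b' v] at h
            exact hc (hQB b hb).1 (hQB b' hb').1 hne h
          -- choose a
          obtain ⟨a, ha, haav, -⟩ := RainbowAux.exists_avoid P
            (fun a => c s(u,a)) (fun a => c s(u,a)) pinj pinj
            {c s(x2,x3)} (∅ : Finset ℕ) (by simp; omega)
          simp only [Finset.mem_singleton] at haav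
          -- choose b
          obtain ⟨b, hb, hbγ, hbη⟩ := RainbowAux.exists_avoid Q
            (fun b => c s(x3,b)) (fun b => c s(b,v)) γinj qinj
            {c s(u,a), c s(a,x2)} {c s(u,a), c s(a,x2), c s(x2,x3)} (by
              have h1 : ({c s(u,a), c s(a,x2)} : Finset ℕ).card ≤ 2 :=
                Finset.card_insert_le _ _ |>.trans (by simp)
              have h2 : ({c s(u,a), c s(a,x2), c s(x2,x3)} : Finset ℕ).card ≤ 3 := by
                refine Finset.card_insert_le _ _ |>.trans ?_
                have := Finset.card_insert_le (c s(a,x2)) ({c s(x2,x3)} : Finset ℕ)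
                simp at this ⊢
                omega
              omega)
          simp only [Finset.mem_insert, Finset.mem_singleton] at hbγ hbη
          push_neg at hbγ hbη
          -- build the walk u, a, x2, x3, b, v
          have hau : G.Adj u a := (hPA a ha).1
          have hax2 : G.Adj a x2 := (hPA a ha).2.symm
          have hx3b : G.Adj x3 b := (hQB b hb).2
          have hbv : G.Adj b v := (hQB b hb).1.symm
          have haA : a ∈ G.neighborFinset u := (Finset.mem_inter.1 ha).2
          have hbB : b ∈ G.neighborFinset v := (Finset.mem_inter.1 hb).2
          have hab : a ≠ b := fun h => Finset.disjoint_left.1 hABdisj haA (h ▸ hbB)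
          have hav : a ≠ v := fun h => hvA (h ▸ haA)
          have hbu : b ≠ u := fun h => huB (h ▸ hbB)
          have hax3 : a ≠ x3 := fun h => hx3A (h ▸ haA)
          have hbx2 : x2 ≠ b := fun h => hx2B (h ▸ hbB)
          -- colour facts
          have e1 : c s(u,a) ≠ c s(a,x2) := by
            rw [swap u a]
            exact hc hau.symm hax2 hx2u.symm
          have e2 : c s(u,a) ≠ c s(x2,x3) := haav
          have e3 : c s(u,a) ≠ c s(x3,b) := fun h => hbγ.1 h.symm
          have e4 : c s(u,a) ≠ c s(b,v) := fun h => hbη.1 h.symm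
          have e5 : c s(a,x2) ≠ c s(x2,x3) := by
            rw [swap a x2]
            exact hc hax2.symm a23 hax3
          have e6 : c s(a,x2) ≠ c s(x3,b) := fun h => hbγ.2 h.symm
          have e7 : c s(a,x2) ≠ c s(b,v) := fun h => hbη.2.1 h.symm
          have e8 : c s(x2,x3) ≠ c s(x3,b) := by
            rw [swap x2 x3]
            exact hc a23.symm hx3b hbx2
          have e9 : c s(x2,x3) ≠ c s(b,v) := fun h => hbη.2.2 h.symm
          have e10 : c s(x3,b) ≠ c s(b,v) := by
            rw [swap x3 b]
            exact hc hx3b.symm hbv hx3v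
          refine ⟨SimpleGraph.Walk.cons hau (SimpleGraph.Walk.cons hax2
            (SimpleGraph.Walk.cons a23 (SimpleGraph.Walk.cons hx3b
            (SimpleGraph.Walk.cons hbv SimpleGraph.Walk.nil)))), ?_, ?_⟩
          · simp [SimpleGraph.Walk.isPath_def]
            exact ⟨⟨hau.ne, hx2u.symm, hx3u.symm, hbu.symm, huv⟩,
              ⟨hax2.ne, hax3, hab, hav⟩, ⟨a23.ne, hbx2, hx2v⟩, ⟨hx3b.ne, hx3v⟩, hbv.ne⟩
          · simp [SimpleGraph.Walk.IsRainbow]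
            exact ⟨⟨e1, e2, e3, e4⟩, ⟨e5, e6, e7⟩, ⟨e8, e9⟩, e10⟩
    · -- distance at least 6 : contradiction
      exfalso
      obtain ⟨hdu3, hdv3⟩ := RainbowAux.shortest_getVert hconn p hp
        (show 3 ≤ p.length by omega)
      set m := p.getVert 3 with hmdef
      have hclose : ∀ x y : V, y ∈ insert x (G.neighborFinset x) → G.dist x y ≤ 1 := by
        intro x y hy
        rw [Finset.mem_insert] at hy
        rcases hy with rfl | hy
        · simp [SimpleGraph.dist_self]
        · exact RainbowAux.dist_le_one_of_adj ((G.mem_neighborFinset x y).1 hy)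
      have htri : ∀ x y z : V, G.dist x z ≤ G.dist x y + G.dist y z :=
        fun x y z => hconn.dist_triangle
      have hdisj : ∀ x y : V, 3 ≤ G.dist x y →
          Disjoint (insert x (G.neighborFinset x)) (insert y (G.neighborFinset y)) := by
        intro x y hxy
        rw [Finset.disjoint_left]
        intro z hz1 hz2
        have h1 := hclose x z hz1
        have h2 := hclose y z hz2
        have h3 := htri x z y
        rw [SimpleGraph.dist_comm (u := y)] at h2
        omega
      have hdmv : 3 ≤ G.dist m v := by omega
      have hd1 : Disjoint (insert u (G.neighborFinset u)) (insert m (G.neighborFinset m)) :=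
        hdisj u m (by omega)
      have hd2 : Disjoint (insert u (G.neighborFinset u)) (insert v (G.neighborFinset v)) :=
        hdisj u v (by omega)
      have hd3 : Disjoint (insert m (G.neighborFinset m)) (insert v (G.neighborFinset v)) :=
        hdisj m v hdmv
      have hcards : (insert u (G.neighborFinset u)).card + (insert m (G.neighborFinset m)).card
          + (insert v (G.neighborFinset v)).card ≤ Fintype.card V := by
        rw [← Finset.card_union_of_disjoint hd1]
        rw [← Finset.card_union_of_disjoint (by
          rw [Finset.disjoint_union_left]; exact ⟨hd2, hd3⟩)]
        rw [← Finset.card_univ]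
        exact Finset.card_le_card (Finset.subset_univ _)
      have hcu : (insert u (G.neighborFinset u)).card = (G.neighborFinset u).card + 1 :=
        Finset.card_insert_of_notMem huA
      have hcm : (insert m (G.neighborFinset m)).card = (G.neighborFinset m).card + 1 :=
        Finset.card_insert_of_notMem (by simp)
      have hcv : (insert v (G.neighborFinset v)).card = (G.neighborFinset v).card + 1 :=
        Finset.card_insert_of_notMem hvB
      have hm := hdeg m
      omega

end Main

theorem stmt16 {V : Type*} [Fintype V] [DecidableEq V] (G : SimpleGraph V) [DecidableRel G.Adj]
    (hconn : G.Connected) (hn : 9 ≤ Fintype.card V)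
    (k : ℕ) (hk : 3 ≤ k) (hδ : Fintype.card V + k ≤ 3 * G.minDegree) :
    G.prcNumber = G.chromaticIndex := by
  classical
  set T := {m | ∃ c : Sym2 V → ℕ, G.ColorsLE c m ∧ G.IsProperEdgeColoring c} with hT
  set S := {m | ∃ c : Sym2 V → ℕ, G.ColorsLE c m ∧ G.IsProperEdgeColoring c ∧
    G.RainbowConnected c} with hS
  have hTne : T.Nonempty := by
    refine ⟨Fintype.card (Sym2 V), fun e => ((Fintype.equivFin (Sym2 V)) e : ℕ), ?_, ?_⟩
    · intro e _; exact (Fintype.equivFin (Sym2 V) e).2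
    · intro x y z hxy hxz hyz h
      have : s(x, y) = s(x, z) := by
        have := (Fintype.equivFin (Sym2 V)).injective (Fin.ext h)
        exact this
      rw [Sym2.eq_iff] at this
      rcases this with ⟨-, h2⟩ | ⟨h1, h2⟩
      · exact hyz h2
      · exact hyz (h2.trans h1)
  have hmem : sInf T ∈ T := Nat.sInf_mem hTne
  obtain ⟨c, hcle, hcproper⟩ := hmem
  have hrc : G.RainbowConnected c := rainbow_of_proper G hconn k hk hδ c hcproper
  have hSmem : sInf T ∈ S := ⟨c, hcle, hcproper, hrc⟩
  have h1 : G.prcNumber ≤ G.chromaticIndex := Nat.sInf_le hSmem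
  have h2 : G.chromaticIndex ≤ G.prcNumber := by
    apply Nat.sInf_le
    have : sInf S ∈ S := Nat.sInf_mem ⟨sInf T, hSmem⟩
    obtain ⟨c', h1', h2', _⟩ := this
    exact ⟨c', h1', h2'⟩
  exact le_antisymm h1 h2
end
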